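/- arXiv:2002.07474 — 11 statements merged into one kernel-verified Lean document; each statement's English description precedes it below -/
import Mathlib

section
/- For a Markov chain (X_n) on a finite state space S with disjoint nonempty sets A, B ⊆ S, the distribution of reactive trajectories satisfies μ^{AB}_i(n) = q⁻_i(n) · P(X_n = i) · q⁺_i(n), where q⁺_i(n) = P(τ⁺_B(n) < τ⁺_A(n) | X_n = i) is the forward committor and q⁻_i(n) = P(τ⁻_A(n) > τ⁻_B(n) | X_n = i) is the backward committor. -/
open MeasureTheory ProbabilityTheory

/-!
Write `s = {X n = i}`, `P` for the event that the chain came to time `n` from `A` rather than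
from `B`, and `F` for the event that it goes on to `B` rather than to `A`. The event `P`
depends only on the past `(X k)_{k ≤ n}` and `F` only on the future `(X k)_{k ≥ n}`, so the
Markov property makes them conditionally independent given `s`, and then
`Pr (s ∩ P ∩ F) = Pr[P ∩ F | s] · Pr s = Pr[P | s] · Pr s · Pr[F | s]`.
-/

theorem ProbabilityTheory.measure_inter_inter_eq_cond_mul_mul_cond
    {Ω : Type*} [MeasurableSpace Ω] {μ : Measure Ω} [IsFiniteMeasure μ] {s t u : Set Ω}
    (hs : MeasurableSet s) (h : μ[t ∩ u | s] = μ[t | s] * μ[u | s]) :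
    μ (s ∩ t ∩ u) = μ[t | s] * μ s * μ[u | s] := by
  rw [Set.inter_assoc, ← cond_mul_eq_inter hs, h]
  ring

namespace Committor

variable {ι Ω S : Type*} [LinearOrder ι]

/-- The event `τ⁺_B(n) < τ⁺_A(n)`: from time `n` on, the chain reaches `B` before `A`. -/
def forwardEvent (X : ι → Ω → S) (A B : Set S) (n : ι) : Set Ω :=
  {ω | ∃ k, n ≤ k ∧ X k ω ∈ B ∧ ∀ m, n ≤ m → m ≤ k → X m ω ∉ A}

/-- The event `τ⁻_A(n) > τ⁻_B(n)`: up to time `n`, the chain was last in `A`, not in `B`. -/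
def backwardEvent (X : ι → Ω → S) (A B : Set S) (n : ι) : Set Ω :=
  {ω | ∃ k ≤ n, X k ω ∈ A ∧ ∀ m, k ≤ m → m ≤ n → X m ω ∉ B}

theorem measurableSet_forwardEvent [Countable ι] [MeasurableSpace Ω] [MeasurableSpace S]
    {X : ι → Ω → S} (hX : ∀ k, Measurable (X k))
    {A B : Set S} (hA : MeasurableSet A) (hB : MeasurableSet B) (n : ι) :
    MeasurableSet (forwardEvent X A B n) := by
  simp only [forwardEvent]
  measurability

theorem measurableSet_backwardEvent [Countable ι] [MeasurableSpace Ω] [MeasurableSpace S]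
    {X : ι → Ω → S} (hX : ∀ k, Measurable (X k))
    {A B : Set S} (hA : MeasurableSet A) (hB : MeasurableSet B) (n : ι) :
    MeasurableSet (backwardEvent X A B n) := by
  simp only [backwardEvent]
  measurability

theorem mem_forwardEvent_congr {X : ι → Ω → S} {A B : Set S} {n : ι} {ω ω' : Ω}
    (h : ∀ k, n ≤ k → X k ω = X k ω') :
    ω ∈ forwardEvent X A B n ↔ ω' ∈ forwardEvent X A B n := by
  refine exists_congr fun k => and_congr_right fun hk => ?_
  refine and_congr (by rw [h k hk]) (forall_congr' fun m => imp_congr_right fun hm => ?_)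
  rw [h m hm]

theorem mem_backwardEvent_congr {X : ι → Ω → S} {A B : Set S} {n : ι} {ω ω' : Ω}
    (h : ∀ k, k ≤ n → X k ω = X k ω') :
    ω ∈ backwardEvent X A B n ↔ ω' ∈ backwardEvent X A B n := by
  refine exists_congr fun k => and_congr_right fun hk => ?_
  refine and_congr (by rw [h k hk])
    (forall_congr' fun m => forall_congr' fun _ => imp_congr_right fun hm => ?_)
  rw [h m hm]

end Committor

open Committor in
theorem stmt0_general
    {S : Type*} [MeasurableSpace S] [MeasurableSingletonClass S]
    {Ω : Type*} [MeasurableSpace Ω] (Pr : Measure Ω) [IsProbabilityMeasure Pr]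
    (X : ℤ → Ω → S) (hXmeas : ∀ n, Measurable (X n))
    (A B : Finset S)
    (hMarkov : ∀ (n : ℤ) (i : S) (E F : Set Ω),
      MeasurableSet E → MeasurableSet F →
      (∀ ω ω', (∀ k, n ≤ k → X k ω = X k ω') → (ω ∈ E ↔ ω' ∈ E)) →
      (∀ ω ω', (∀ k, k ≤ n → X k ω = X k ω') → (ω ∈ F ↔ ω' ∈ F)) →
      ProbabilityTheory.cond Pr {ω | X n ω = i} (E ∩ F) =
        ProbabilityTheory.cond Pr {ω | X n ω = i} E *
          ProbabilityTheory.cond Pr {ω | X n ω = i} F) :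
    ∀ (n : ℤ) (i : S),
      Pr ({ω | X n ω = i} ∩
          {ω | ∃ k ≤ n, X k ω ∈ A ∧ ∀ m, k ≤ m → m ≤ n → X m ω ∉ B} ∩
          {ω | ∃ k, n ≤ k ∧ X k ω ∈ B ∧ ∀ m, n ≤ m → m ≤ k → X m ω ∉ A}) =
        ProbabilityTheory.cond Pr {ω | X n ω = i}
            {ω | ∃ k ≤ n, X k ω ∈ A ∧ ∀ m, k ≤ m → m ≤ n → X m ω ∉ B} *
          Pr {ω | X n ω = i} *
          ProbabilityTheory.cond Pr {ω | X n ω = i}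
            {ω | ∃ k, n ≤ k ∧ X k ω ∈ B ∧ ∀ m, n ≤ m → m ≤ k → X m ω ∉ A} := by
  intro n i
  have hindep := hMarkov n i (forwardEvent X A B n) (backwardEvent X A B n)
    (measurableSet_forwardEvent hXmeas A.measurableSet B.measurableSet n)
    (measurableSet_backwardEvent hXmeas A.measurableSet B.measurableSet n)
    (fun _ _ => mem_forwardEvent_congr) (fun _ _ => mem_backwardEvent_congr)
  rw [Set.inter_comm] at hindep
  exact measure_inter_inter_eq_cond_mul_mul_cond
    (hXmeas n (measurableSet_singleton i)) (hindep.trans (mul_comm _ _))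

/-- **TPT, distribution of reactive trajectories.**
For a Markov chain `(X n)` on a finite state space `S` with disjoint nonempty sets
`A, B ⊆ S`, the distribution of reactive trajectories
`μ^{AB}_i(n) = Pr(X n = i, τ⁻_A(n) > τ⁻_B(n), τ⁺_B(n) < τ⁺_A(n))`
satisfies `μ^{AB}_i(n) = q⁻_i(n) ⬝ Pr(X n = i) ⬝ q⁺_i(n)`, where
`q⁺_i(n)` and `q⁻_i(n)` are the forward and backward committors.  The Markov
property is formulated as conditional independence of any event depending only on
the future from any event depending only on the past, given the present state. -/
theorem stmt0
    {S : Type*} [Fintype S] [MeasurableSpace S] [MeasurableSingletonClass S]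
    {Ω : Type*} [MeasurableSpace Ω] (Pr : Measure Ω) [IsProbabilityMeasure Pr]
    (X : ℤ → Ω → S) (hXmeas : ∀ n, Measurable (X n))
    (A B : Finset S) (hA : A.Nonempty) (hB : B.Nonempty) (hAB : Disjoint A B)
    (hMarkov : ∀ (n : ℤ) (i : S) (E F : Set Ω),
      MeasurableSet E → MeasurableSet F →
      (∀ ω ω', (∀ k, n ≤ k → X k ω = X k ω') → (ω ∈ E ↔ ω' ∈ E)) →
      (∀ ω ω', (∀ k, k ≤ n → X k ω = X k ω') → (ω ∈ F ↔ ω' ∈ F)) →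
      ProbabilityTheory.cond Pr {ω | X n ω = i} (E ∩ F) =
        ProbabilityTheory.cond Pr {ω | X n ω = i} E *
          ProbabilityTheory.cond Pr {ω | X n ω = i} F) :
    ∀ (n : ℤ) (i : S),
      Pr ({ω | X n ω = i} ∩
          {ω | ∃ k ≤ n, X k ω ∈ A ∧ ∀ m, k ≤ m → m ≤ n → X m ω ∉ B} ∩
          {ω | ∃ k, n ≤ k ∧ X k ω ∈ B ∧ ∀ m, n ≤ m → m ≤ k → X m ω ∉ A}) =
        ProbabilityTheory.cond Pr {ω | X n ω = i}
            {ω | ∃ k ≤ n, X k ω ∈ A ∧ ∀ m, k ≤ m → m ≤ n → X m ω ∉ B} *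
          Pr {ω | X n ω = i} *
          ProbabilityTheory.cond Pr {ω | X n ω = i}
            {ω | ∃ k, n ≤ k ∧ X k ω ∈ B ∧ ∀ m, n ≤ m → m ≤ k → X m ω ∉ A} :=
  stmt0_general Pr X hXmeas A B hMarkov
end

section
/- For a Markov chain (X_n) on a finite state space S with time-dependent transition probabilities P_{ij}(n) = P(X_{n+1}=j | X_n=i), the current of reactive trajectories satisfies f^{AB}_{ij}(n) = q⁻_i(n) · P(X_n = i) · P_{ij}(n) · q⁺_j(n+1). -/
open MeasureTheory ProbabilityTheory

private lemma mul_cond_eq_inter {Ω : Type*} [MeasurableSpace Ω] (Pr : Measure Ω)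
    [IsProbabilityMeasure Pr] {s : Set Ω} (hs : MeasurableSet s) (t : Set Ω) :
    Pr s * ProbabilityTheory.cond Pr s t = Pr (s ∩ t) := by
  rw [mul_comm, ProbabilityTheory.cond_mul_eq_inter hs t Pr]

/-- **TPT, current of reactive trajectories.**
For a Markov chain `(X n)` on a finite state space `S` with time-dependent transition
probabilities `P n i j = ℙ(X (n+1) = j | X n = i)`, the current of reactive trajectories
`f^{AB}_{ij}(n) = ℙ(X n = i, X (n+1) = j, τ⁻_A(n) > τ⁻_B(n), τ⁺_B(n+1) < τ⁺_A(n+1))`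
satisfies `f^{AB}_{ij}(n) = q⁻_i(n) ⬝ ℙ(X n = i) ⬝ P n i j ⬝ q⁺_j(n+1)`. -/
theorem stmt1
    {S : Type*} [Fintype S] [MeasurableSpace S] [MeasurableSingletonClass S]
    {Ω : Type*} [MeasurableSpace Ω] (Pr : Measure Ω) [IsProbabilityMeasure Pr]
    (X : ℤ → Ω → S) (hXmeas : ∀ n, Measurable (X n))
    (A B : Finset S) (hA : A.Nonempty) (hB : B.Nonempty) (hAB : Disjoint A B)
    (P : ℤ → S → S → ENNReal)
    (hP : ∀ (n : ℤ) (i j : S),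
      ProbabilityTheory.cond Pr {ω | X n ω = i} {ω | X (n + 1) ω = j} = P n i j)
    (hMarkov : ∀ (n : ℤ) (i : S) (E F : Set Ω),
      MeasurableSet E → MeasurableSet F →
      (∀ ω ω', (∀ k, n ≤ k → X k ω = X k ω') → (ω ∈ E ↔ ω' ∈ E)) →
      (∀ ω ω', (∀ k, k ≤ n → X k ω = X k ω') → (ω ∈ F ↔ ω' ∈ F)) →
      ProbabilityTheory.cond Pr {ω | X n ω = i} (E ∩ F) =
        ProbabilityTheory.cond Pr {ω | X n ω = i} E *
          ProbabilityTheory.cond Pr {ω | X n ω = i} F) :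
    ∀ (n : ℤ) (i j : S),
      Pr ({ω | X n ω = i} ∩ {ω | X (n + 1) ω = j} ∩
          {ω | ∃ k ≤ n, X k ω ∈ A ∧ ∀ m, k ≤ m → m ≤ n → X m ω ∉ B} ∩
          {ω | ∃ k, n + 1 ≤ k ∧ X k ω ∈ B ∧ ∀ m, n + 1 ≤ m → m ≤ k → X m ω ∉ A}) =
        ProbabilityTheory.cond Pr {ω | X n ω = i}
            {ω | ∃ k ≤ n, X k ω ∈ A ∧ ∀ m, k ≤ m → m ≤ n → X m ω ∉ B} *
          Pr {ω | X n ω = i} * P n i j *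
          ProbabilityTheory.cond Pr {ω | X (n + 1) ω = j}
            {ω | ∃ k, n + 1 ≤ k ∧ X k ω ∈ B ∧ ∀ m, n + 1 ≤ m → m ≤ k → X m ω ∉ A} := by
  intro n i j
  set s1 : Set Ω := {ω | X n ω = i} with hs1def
  set s2 : Set Ω := {ω | X (n + 1) ω = j} with hs2def
  set Pa : Set Ω := {ω | ∃ k ≤ n, X k ω ∈ A ∧ ∀ m, k ≤ m → m ≤ n → X m ω ∉ B} with hPadef
  set Fu : Set Ω :=
    {ω | ∃ k, n + 1 ≤ k ∧ X k ω ∈ B ∧ ∀ m, n + 1 ≤ m → m ≤ k → X m ω ∉ A} with hFudef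
  have hs1 : MeasurableSet s1 := hXmeas n (measurableSet_singleton i)
  have hs2 : MeasurableSet s2 := hXmeas (n + 1) (measurableSet_singleton j)
  have hPa : MeasurableSet Pa := by
    have : Pa = ⋃ k, ⋃ _ : k ≤ n,
        ((X k ⁻¹' ↑A) ∩ ⋂ m, ⋂ _ : k ≤ m, ⋂ _ : m ≤ n, (X m ⁻¹' ↑B)ᶜ) := by
      ext ω; simp only [hPadef, Set.mem_iUnion, Set.mem_iInter, Set.mem_setOf_eq,
        Set.mem_inter_iff, Set.mem_preimage, Set.mem_compl_iff, Finset.mem_coe]; tauto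
    rw [this]
    exact .iUnion fun k => .iUnion fun _ =>
      (hXmeas k A.measurableSet).inter <| .iInter fun m => .iInter fun _ => .iInter fun _ =>
        (hXmeas m B.measurableSet).compl
  have hFu : MeasurableSet Fu := by
    have : Fu = ⋃ k, ⋃ _ : n + 1 ≤ k,
        ((X k ⁻¹' ↑B) ∩ ⋂ m, ⋂ _ : n + 1 ≤ m, ⋂ _ : m ≤ k, (X m ⁻¹' ↑A)ᶜ) := by
      ext ω; simp only [hFudef, Set.mem_iUnion, Set.mem_iInter, Set.mem_setOf_eq,
        Set.mem_inter_iff, Set.mem_preimage, Set.mem_compl_iff, Finset.mem_coe]; tauto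
    rw [this]
    exact .iUnion fun k => .iUnion fun _ =>
      (hXmeas k B.measurableSet).inter <| .iInter fun m => .iInter fun _ => .iInter fun _ =>
        (hXmeas m A.measurableSet).compl
  -- Step 1: condition at time n+1
  have step1 : ProbabilityTheory.cond Pr s2 (Fu ∩ (s1 ∩ Pa)) =
      ProbabilityTheory.cond Pr s2 Fu * ProbabilityTheory.cond Pr s2 (s1 ∩ Pa) := by
    apply hMarkov (n + 1) j _ _ hFu (hs1.inter hPa)
    · intro ω ω' h
      constructor
      · rintro ⟨k, hk, hkB, hm⟩
        exact ⟨k, hk, h k hk ▸ hkB, fun m hm1 hm2 => h m hm1 ▸ hm m hm1 hm2⟩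
      · rintro ⟨k, hk, hkB, hm⟩
        exact ⟨k, hk, (h k hk).symm ▸ hkB, fun m hm1 hm2 => (h m hm1) ▸ hm m hm1 hm2⟩
    · intro ω ω' h
      have hn : X n ω = X n ω' := h n (by omega)
      constructor
      · rintro ⟨h1, k, hk, hkA, hm⟩
        refine ⟨show X n ω' = i from hn ▸ h1, k, hk, (h k (by omega)) ▸ hkA,
          fun m hm1 hm2 => (h m (by omega)) ▸ hm m hm1 hm2⟩
      · rintro ⟨h1, k, hk, hkA, hm⟩
        refine ⟨show X n ω = i from hn.symm ▸ h1, k, hk, (h k (by omega)).symm ▸ hkA,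
          fun m hm1 hm2 => (h m (by omega)).symm ▸ hm m hm1 hm2⟩
  -- Step 2: condition at time n
  have step2 : ProbabilityTheory.cond Pr s1 (s2 ∩ Pa) =
      ProbabilityTheory.cond Pr s1 s2 * ProbabilityTheory.cond Pr s1 Pa := by
    apply hMarkov n i _ _ hs2 hPa
    · intro ω ω' h
      have : X (n + 1) ω = X (n + 1) ω' := h (n + 1) (by omega)
      simp only [hs2def, Set.mem_setOf_eq, this]
    · intro ω ω' h
      constructor
      · rintro ⟨k, hk, hkA, hm⟩
        exact ⟨k, hk, (h k hk) ▸ hkA, fun m hm1 hm2 => (h m hm2) ▸ hm m hm1 hm2⟩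
      · rintro ⟨k, hk, hkA, hm⟩
        exact ⟨k, hk, (h k hk).symm ▸ hkA, fun m hm1 hm2 => (h m hm2).symm ▸ hm m hm1 hm2⟩
  have key : s1 ∩ s2 ∩ Pa ∩ Fu = s2 ∩ (Fu ∩ (s1 ∩ Pa)) := by
    ext ω; constructor
    · rintro ⟨⟨⟨h1, h2⟩, h3⟩, h4⟩; exact ⟨h2, h4, h1, h3⟩
    · rintro ⟨h2, h4, h1, h3⟩; exact ⟨⟨⟨h1, h2⟩, h3⟩, h4⟩
  have key2 : s2 ∩ (s1 ∩ Pa) = s1 ∩ (s2 ∩ Pa) := by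
    ext ω; constructor
    · rintro ⟨h2, h1, h3⟩; exact ⟨h1, h2, h3⟩
    · rintro ⟨h1, h2, h3⟩; exact ⟨h2, h1, h3⟩
  calc Pr (s1 ∩ s2 ∩ Pa ∩ Fu)
      = Pr s2 * ProbabilityTheory.cond Pr s2 (Fu ∩ (s1 ∩ Pa)) := by
        rw [mul_cond_eq_inter Pr hs2, key]
    _ = ProbabilityTheory.cond Pr s2 Fu * (Pr s2 * ProbabilityTheory.cond Pr s2 (s1 ∩ Pa)) := by
        rw [step1]; ring
    _ = ProbabilityTheory.cond Pr s2 Fu * Pr (s1 ∩ (s2 ∩ Pa)) := by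
        rw [mul_cond_eq_inter Pr hs2, key2]
    _ = ProbabilityTheory.cond Pr s2 Fu *
          (Pr s1 * (ProbabilityTheory.cond Pr s1 s2 * ProbabilityTheory.cond Pr s1 Pa)) := by
        rw [← mul_cond_eq_inter Pr hs1, step2]
    _ = ProbabilityTheory.cond Pr s1 Pa * Pr s1 * P n i j * ProbabilityTheory.cond Pr s2 Fu := by
        rw [← hP n i j]; ring
end

section
/- For a general Markov chain with reactive current f^{AB}, the discrete rate of transitions leaving A at time n equals the total reactive current out of A: k^{A→}(n) := P(X_n ∈ A, τ⁺_B(n+1) < τ⁺_A(n+1)) = Σ_{i∈A, j∈S} f^{AB}_{ij}(n). Similarly, the discrete rate of transitions entering B at time n satisfies k^{→B}(n) := P(X_n ∈ B, τ⁻_A(n−1) > τ⁻_B(n−1)) = Σ_{i∈S, j∈B} f^{AB}_{ij}(n−1). -/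
open MeasureTheory ProbabilityTheory

lemma key_split {S : Type*} [Fintype S] [MeasurableSpace S] [MeasurableSingletonClass S]
    {Ω : Type*} [MeasurableSpace Ω] (Pr : Measure Ω)
    (Y Z : Ω → S) (hY : Measurable Y) (hZ : Measurable Z)
    (C D : Finset S) (U : Set Ω) (hU : MeasurableSet U) :
    Pr ((Y ⁻¹' ↑C) ∩ (Z ⁻¹' ↑D) ∩ U) =
      ∑ i ∈ C, ∑ j ∈ D, Pr ({ω | Y ω = i} ∩ {ω | Z ω = j} ∩ U) := by
  classical
  have hset : (Y ⁻¹' ↑C) ∩ (Z ⁻¹' ↑D) ∩ U =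
      ⋃ p ∈ C ×ˢ D, ({ω | Y ω = p.1} ∩ {ω | Z ω = p.2} ∩ U) := by
    ext ω
    simp only [Set.mem_iUnion, Finset.mem_product, Set.mem_inter_iff, Set.mem_preimage,
      Set.mem_setOf_eq, Finset.mem_coe, exists_prop]
    constructor
    · rintro ⟨⟨hYω, hZω⟩, hUω⟩
      exact ⟨(Y ω, Z ω), ⟨hYω, hZω⟩, ⟨rfl, rfl⟩, hUω⟩
    · rintro ⟨p, ⟨h1, h2⟩, ⟨hy, hz⟩, hu⟩
      exact ⟨⟨hy ▸ h1, hz ▸ h2⟩, hu⟩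
  rw [hset, measure_biUnion_finset, Finset.sum_product]
  · intro p _ q _ hpq
    simp only [Function.onFun, Set.disjoint_left]
    rintro ω ⟨⟨hy1, hz1⟩, -⟩ ⟨⟨hy2, hz2⟩, -⟩
    exact hpq (Prod.ext (hy1.symm.trans hy2) (hz1.symm.trans hz2))
  · intro p _
    exact ((hY (measurableSet_singleton p.1)).inter (hZ (measurableSet_singleton p.2))).inter hU

/-- **TPT, discrete rates as sums of the reactive current.**
For a Markov chain `(X n)` on a finite state space `S` with disjoint nonempty `A, B`,
the discrete rate of transitions leaving `A` at time `n`,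
`k^{A→}(n) = ℙ(X n ∈ A, τ⁺_B(n+1) < τ⁺_A(n+1))`, equals `∑_{i∈A, j∈S} f^{AB}_{ij}(n)`,
and the discrete rate of transitions entering `B` at time `n`,
`k^{→B}(n) = ℙ(X n ∈ B, τ⁻_A(n−1) > τ⁻_B(n−1))`, equals `∑_{i∈S, j∈B} f^{AB}_{ij}(n−1)`,
where `f^{AB}_{ij}(n) = ℙ(X n = i, X (n+1) = j, τ⁻_A(n) > τ⁻_B(n), τ⁺_B(n+1) < τ⁺_A(n+1))`. -/
theorem stmt2
    {S : Type*} [Fintype S] [MeasurableSpace S] [MeasurableSingletonClass S]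
    {Ω : Type*} [MeasurableSpace Ω] (Pr : Measure Ω) [IsProbabilityMeasure Pr]
    (X : ℤ → Ω → S) (hXmeas : ∀ n, Measurable (X n))
    (A B : Finset S) (hA : A.Nonempty) (hB : B.Nonempty) (hAB : Disjoint A B) :
    ∀ n : ℤ,
      (Pr ({ω | X n ω ∈ A} ∩
          {ω | ∃ k, n + 1 ≤ k ∧ X k ω ∈ B ∧ ∀ m, n + 1 ≤ m → m ≤ k → X m ω ∉ A}) =
        ∑ i ∈ A, ∑ j : S,
          Pr ({ω | X n ω = i} ∩ {ω | X (n + 1) ω = j} ∩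
            {ω | ∃ k ≤ n, X k ω ∈ A ∧ ∀ m, k ≤ m → m ≤ n → X m ω ∉ B} ∩
            {ω | ∃ k, n + 1 ≤ k ∧ X k ω ∈ B ∧ ∀ m, n + 1 ≤ m → m ≤ k → X m ω ∉ A})) ∧
      (Pr ({ω | X n ω ∈ B} ∩
          {ω | ∃ k ≤ n - 1, X k ω ∈ A ∧ ∀ m, k ≤ m → m ≤ n - 1 → X m ω ∉ B}) =
        ∑ i : S, ∑ j ∈ B,
          Pr ({ω | X (n - 1) ω = i} ∩ {ω | X n ω = j} ∩
            {ω | ∃ k ≤ n - 1, X k ω ∈ A ∧ ∀ m, k ≤ m → m ≤ n - 1 → X m ω ∉ B} ∩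
            {ω | ∃ k, n ≤ k ∧ X k ω ∈ B ∧ ∀ m, n ≤ m → m ≤ k → X m ω ∉ A})) := by
  classical
  intro n
  -- measurability of the "future" sets
  have hFutMeas : ∀ a : ℤ,
      MeasurableSet {ω : Ω | ∃ k, a ≤ k ∧ X k ω ∈ B ∧ ∀ m, a ≤ m → m ≤ k → X m ω ∉ A} := by
    intro a
    have : {ω : Ω | ∃ k, a ≤ k ∧ X k ω ∈ B ∧ ∀ m, a ≤ m → m ≤ k → X m ω ∉ A} =
        ⋃ k, ⋃ (_ : a ≤ k),
          ((X k ⁻¹' ↑B) ∩ ⋂ m, ⋂ (_ : a ≤ m), ⋂ (_ : m ≤ k), (X m ⁻¹' ↑A)ᶜ) := by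
      ext ω
      simp [Set.mem_iUnion, Set.mem_iInter]
      tauto
    rw [this]
    exact MeasurableSet.iUnion fun k => MeasurableSet.iUnion fun _ =>
      ((hXmeas k) B.measurableSet).inter
        (MeasurableSet.iInter fun m => MeasurableSet.iInter fun _ =>
          MeasurableSet.iInter fun _ => ((hXmeas m) A.measurableSet).compl)
  -- measurability of the "past" sets
  have hPastMeas : ∀ a : ℤ,
      MeasurableSet {ω : Ω | ∃ k ≤ a, X k ω ∈ A ∧ ∀ m, k ≤ m → m ≤ a → X m ω ∉ B} := by
    intro a
    have : {ω : Ω | ∃ k ≤ a, X k ω ∈ A ∧ ∀ m, k ≤ m → m ≤ a → X m ω ∉ B} =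
        ⋃ k, ⋃ (_ : k ≤ a),
          ((X k ⁻¹' ↑A) ∩ ⋂ m, ⋂ (_ : k ≤ m), ⋂ (_ : m ≤ a), (X m ⁻¹' ↑B)ᶜ) := by
      ext ω
      simp [Set.mem_iUnion, Set.mem_iInter]
      tauto
    rw [this]
    exact MeasurableSet.iUnion fun k => MeasurableSet.iUnion fun _ =>
      ((hXmeas k) A.measurableSet).inter
        (MeasurableSet.iInter fun m => MeasurableSet.iInter fun _ =>
          MeasurableSet.iInter fun _ => ((hXmeas m) B.measurableSet).compl)
  constructor
  · -- rate out of A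
    have h1 : {ω : Ω | X n ω ∈ A} ∩
        {ω : Ω | ∃ k, n + 1 ≤ k ∧ X k ω ∈ B ∧ ∀ m, n + 1 ≤ m → m ≤ k → X m ω ∉ A} =
        (X n ⁻¹' ↑A) ∩ (X (n + 1) ⁻¹' ↑(Finset.univ : Finset S)) ∩
          ({ω : Ω | ∃ k ≤ n, X k ω ∈ A ∧ ∀ m, k ≤ m → m ≤ n → X m ω ∉ B} ∩
           {ω : Ω | ∃ k, n + 1 ≤ k ∧ X k ω ∈ B ∧ ∀ m, n + 1 ≤ m → m ≤ k → X m ω ∉ A}) := by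
      ext ω
      simp only [Set.mem_inter_iff, Set.mem_setOf_eq, Set.mem_preimage, Finset.coe_univ,
        Set.mem_univ, Finset.mem_coe]
      constructor
      · rintro ⟨hmem, hfut⟩
        refine ⟨⟨hmem, trivial⟩, ⟨n, le_refl n, hmem, ?_⟩, hfut⟩
        intro m h1 h2
        have hm : m = n := le_antisymm h2 h1
        subst hm
        exact fun hb => (Finset.disjoint_left.mp hAB hmem) hb
      · rintro ⟨⟨hmem, -⟩, -, hfut⟩
        exact ⟨hmem, hfut⟩
    rw [h1, key_split Pr (X n) (X (n + 1)) (hXmeas n) (hXmeas (n + 1)) A Finset.univ _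
      ((hPastMeas n).inter (hFutMeas (n + 1)))]
    simp only [Set.inter_assoc]
  · -- rate into B
    have h2 : {ω : Ω | X n ω ∈ B} ∩
        {ω : Ω | ∃ k ≤ n - 1, X k ω ∈ A ∧ ∀ m, k ≤ m → m ≤ n - 1 → X m ω ∉ B} =
        (X (n - 1) ⁻¹' ↑(Finset.univ : Finset S)) ∩ (X n ⁻¹' ↑B) ∩
          ({ω : Ω | ∃ k ≤ n - 1, X k ω ∈ A ∧ ∀ m, k ≤ m → m ≤ n - 1 → X m ω ∉ B} ∩
           {ω : Ω | ∃ k, n ≤ k ∧ X k ω ∈ B ∧ ∀ m, n ≤ m → m ≤ k → X m ω ∉ A}) := by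
      ext ω
      simp only [Set.mem_inter_iff, Set.mem_setOf_eq, Set.mem_preimage, Finset.coe_univ,
        Set.mem_univ, Finset.mem_coe]
      constructor
      · rintro ⟨hmem, hpast⟩
        refine ⟨⟨trivial, hmem⟩, hpast, ⟨n, le_refl n, hmem, ?_⟩⟩
        intro m h1 h2
        have hm : m = n := le_antisymm h2 h1
        subst hm
        exact fun ha => (Finset.disjoint_right.mp hAB hmem) ha
      · rintro ⟨⟨-, hmem⟩, hpast, -⟩
        exact ⟨hmem, hpast⟩
    rw [h2, key_split Pr (X (n - 1)) (X n) (hXmeas (n - 1)) (hXmeas n) Finset.univ B _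
      ((hPastMeas (n - 1)).inter (hFutMeas n))]
    simp only [Set.inter_assoc]
end

section
/- If the transition matrix P of an irreducible finite-state Markov chain is irreducible, then the forward committor boundary value problem (q⁺_i = Σ_j P_{ij} q⁺_j for i ∈ C, q⁺ = 0 on A, q⁺ = 1 on B) has a unique solution. -/
open Finset

section Aux
variable {S : Type*} [Fintype S] [DecidableEq S]

lemma matpow_nonneg (P : Matrix S S ℝ) (hnonneg : ∀ i j, 0 ≤ P i j) :
    ∀ m i j, 0 ≤ (P ^ m) i j := by
  intro m
  induction m with
  | zero =>
      intro i j
      by_cases h : i = j <;> simp [Matrix.one_apply, h]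
  | succ m ih =>
      intro i j
      rw [pow_succ, Matrix.mul_apply]
      exact Finset.sum_nonneg fun k _ => mul_nonneg (ih i k) (hnonneg k j)

lemma maxprin (P : Matrix S S ℝ)
    (hnonneg : ∀ i j, 0 ≤ P i j)
    (hrow : ∀ i, ∑ j : S, P i j = 1)
    (hirr : ∀ i j : S, ∃ m : ℕ, 0 < m ∧ 0 < (P ^ m) i j)
    (A B : Finset S) (hA : A.Nonempty)
    (f : S → ℝ)
    (hf : ∀ i ∈ ((A ∪ B)ᶜ : Finset S), f i = ∑ j : S, P i j * f j)
    (hf0 : ∀ i ∈ A ∪ B, f i = 0) :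
    ∀ i, f i ≤ 0 := by
  by_contra hcon
  push_neg at hcon
  obtain ⟨i₁, hi₁⟩ := hcon
  have hne : (univ : Finset S).Nonempty := ⟨i₁, mem_univ _⟩
  obtain ⟨i₀, -, hmax⟩ := Finset.exists_max_image univ f hne
  have hmax : ∀ j, f j ≤ f i₀ := fun j => hmax j (mem_univ j)
  have hpos : 0 < f i₀ := lt_of_lt_of_le hi₁ (hmax i₁)
  have step : ∀ k, f k = f i₀ → ∀ l, 0 < P k l → f l = f i₀ := by
    intro k hk l hl
    have hkC : k ∈ ((A ∪ B)ᶜ : Finset S) := by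
      rw [Finset.mem_compl]
      intro hmem
      rw [hf0 k hmem] at hk
      exact absurd hk.symm (ne_of_gt hpos)
    have heq : ∑ j : S, P k j * (f i₀ - f j) = 0 := by
      simp only [mul_sub]
      rw [Finset.sum_sub_distrib, ← Finset.sum_mul, hrow k, one_mul, ← hf k hkC, hk, sub_self]
    have hterm : ∀ j ∈ (univ : Finset S), 0 ≤ P k j * (f i₀ - f j) :=
      fun j _ => mul_nonneg (hnonneg k j) (sub_nonneg.mpr (hmax j))
    have hall := (Finset.sum_eq_zero_iff_of_nonneg hterm).mp heq
    have := hall l (mem_univ l)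
    rcases mul_eq_zero.mp this with h | h
    · exact absurd h (ne_of_gt hl)
    · linarith [sub_eq_zero.mp h]
  have key : ∀ m (l : S), 0 < (P ^ m) i₀ l → f l = f i₀ := by
    intro m
    induction m with
    | zero =>
        intro l hl
        by_cases h : i₀ = l
        · rw [← h]
        · simp [Matrix.one_apply, h] at hl
    | succ m ih =>
        intro l hl
        rw [pow_succ, Matrix.mul_apply] at hl
        have : ∃ k ∈ (univ : Finset S), 0 < (P ^ m) i₀ k * P k l := by
          by_contra hno
          push_neg at hno
          have : ∑ k : S, (P ^ m) i₀ k * P k l ≤ 0 :=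
            Finset.sum_nonpos fun k _ => hno k (mem_univ k)
          linarith
        obtain ⟨k, -, hk⟩ := this
        have h1 : 0 < (P ^ m) i₀ k :=
          lt_of_le_of_ne (matpow_nonneg P hnonneg m i₀ k)
            (by rintro h; rw [← h] at hk; simp at hk)
        have h2 : 0 < P k l :=
          lt_of_le_of_ne (hnonneg k l) (by rintro h; rw [← h] at hk; simp at hk)
        exact step k (ih k h1) l h2
  obtain ⟨a, ha⟩ := hA
  obtain ⟨m, -, hm⟩ := hirr i₀ a
  have hfa : f a = f i₀ := key m a hm
  have : f a = 0 := hf0 a (Finset.mem_union_left _ ha)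
  linarith

lemma harmzero (P : Matrix S S ℝ)
    (hnonneg : ∀ i j, 0 ≤ P i j)
    (hrow : ∀ i, ∑ j : S, P i j = 1)
    (hirr : ∀ i j : S, ∃ m : ℕ, 0 < m ∧ 0 < (P ^ m) i j)
    (A B : Finset S) (hA : A.Nonempty)
    (f : S → ℝ)
    (hf : ∀ i ∈ ((A ∪ B)ᶜ : Finset S), f i = ∑ j : S, P i j * f j)
    (hf0 : ∀ i ∈ A ∪ B, f i = 0) :
    ∀ i, f i = 0 := by
  have h1 := maxprin P hnonneg hrow hirr A B hA f hf hf0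
  have h2 := maxprin P hnonneg hrow hirr A B hA (fun i => -f i)
    (by
      intro i hi
      rw [hf i hi, ← Finset.sum_neg_distrib]
      exact Finset.sum_congr rfl fun j _ => by ring)
    (fun i hi => by simp [hf0 i hi])
  intro i
  have := h2 i
  linarith [h1 i]

end Aux

/-- **Existence and uniqueness of the forward committor.**
If the row-stochastic transition matrix `P` of a finite-state Markov chain is
irreducible, then the forward committor boundary value problem
(`q⁺_i = ∑_j P i j * q⁺_j` for `i ∈ C = (A∪B)ᶜ`, `q⁺ = 0` on `A`, `q⁺ = 1` on `B`)
has a unique solution. -/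
theorem stmt4
    {S : Type*} [Fintype S] [DecidableEq S]
    (P : Matrix S S ℝ)
    (hnonneg : ∀ i j, 0 ≤ P i j)
    (hrow : ∀ i, ∑ j : S, P i j = 1)
    (hirr : ∀ i j : S, ∃ m : ℕ, 0 < m ∧ 0 < (P ^ m) i j)
    (A B : Finset S) (hA : A.Nonempty) (hB : B.Nonempty) (hAB : Disjoint A B)
    (hC : ((A ∪ B)ᶜ : Finset S).Nonempty) :
    ∃! q : S → ℝ,
      (∀ i ∈ ((A ∪ B)ᶜ : Finset S), q i = ∑ j : S, P i j * q j) ∧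
      (∀ i ∈ A, q i = 0) ∧
      (∀ i ∈ B, q i = 1) := by
  classical
  set C' : Finset S := ((A ∪ B)ᶜ : Finset S) with hC'
  -- the matrix I - P|_C on functions on C
  let M : Matrix {x // x ∈ C'} {x // x ∈ C'} ℝ :=
    1 - Matrix.of (fun i j : {x // x ∈ C'} => P i.1 j.1)
  have hMvec : ∀ (g : {x // x ∈ C'} → ℝ) (i : {x // x ∈ C'}),
      M.mulVec g i = g i - ∑ j : {x // x ∈ C'}, P i.1 j.1 * g j := by
    intro g i
    simp only [M, Matrix.sub_mulVec, Matrix.one_mulVec, Pi.sub_apply]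
    congr 1
  -- injectivity of I - P|_C
  have hinj : Function.Injective M.mulVecLin := by
    rw [← LinearMap.ker_eq_bot, LinearMap.ker_eq_bot']
    intro g hg
    have hg' : ∀ i : {x // x ∈ C'}, g i = ∑ j : {x // x ∈ C'}, P i.1 j.1 * g j := by
      intro i
      have := congrFun hg i
      rw [Matrix.mulVecLin_apply] at this
      rw [hMvec] at this
      have : g i - ∑ j : {x // x ∈ C'}, P i.1 j.1 * g j = 0 := this
      linarith
    set f : S → ℝ := fun s => if h : s ∈ C' then g ⟨s, h⟩ else 0 with hfdef
    have hfC : ∀ (i : S) (h : i ∈ C'), f i = g ⟨i, h⟩ := fun i h => dif_pos h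
    have hfnot : ∀ i : S, i ∉ C' → f i = 0 := fun i h => dif_neg h
    have hsum : ∀ i : S, ∑ j : S, P i j * f j = ∑ j : {x // x ∈ C'}, P i j.1 * g j := by
      intro i
      rw [← Finset.sum_subset C'.subset_univ (fun x _ hx => by rw [hfnot x hx, mul_zero])]
      rw [Finset.univ_eq_attach, ← Finset.sum_attach C' (fun j => P i j * f j)]
      exact Finset.sum_congr rfl fun j _ => by rw [hfC j.1 j.2]
    have hzero : ∀ i, f i = 0 := by
      apply harmzero P hnonneg hrow hirr A B hA f
      · intro i hi
        rw [hfC i hi, hsum i]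
        exact hg' ⟨i, hi⟩
      · intro i hi
        exact hfnot i (by rwa [hC', Finset.mem_compl, not_not])
    funext j
    have := hzero j.1
    rw [hfC j.1 j.2] at this
    simpa using this
  have hsurj : Function.Surjective M.mulVecLin :=
    (LinearMap.injective_iff_surjective).mp hinj
  obtain ⟨g, hg⟩ := hsurj (fun i => ∑ j ∈ B, P i.1 j)
  have hgeq : ∀ i : {x // x ∈ C'},
      g i - ∑ j : {x // x ∈ C'}, P i.1 j.1 * g j = ∑ j ∈ B, P i.1 j := by
    intro i
    have := congrFun hg i
    rw [Matrix.mulVecLin_apply, hMvec] at this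
    exact this
  -- the committor
  set q : S → ℝ := fun s => if h : s ∈ C' then g ⟨s, h⟩ else if s ∈ B then 1 else 0 with hqdef
  have hqC : ∀ (i : S) (h : i ∈ C'), q i = g ⟨i, h⟩ := fun i h => dif_pos h
  have hAnotC : ∀ i ∈ A, i ∉ C' := fun i hi => by
    rw [hC', Finset.mem_compl, not_not]; exact Finset.mem_union_left _ hi
  have hBnotC : ∀ i ∈ B, i ∉ C' := fun i hi => by
    rw [hC', Finset.mem_compl, not_not]; exact Finset.mem_union_right _ hi
  have hqA : ∀ i ∈ A, q i = 0 := by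
    intro i hi
    simp only [hqdef]
    rw [dif_neg (hAnotC i hi), if_neg (Finset.disjoint_left.mp hAB hi)]
  have hqB : ∀ i ∈ B, q i = 1 := by
    intro i hi
    simp only [hqdef]
    rw [dif_neg (hBnotC i hi), if_pos hi]
  have hqharm : ∀ i ∈ C', q i = ∑ j : S, P i j * q j := by
    intro i hi
    have hsplit : ∑ j : S, P i j * q j
        = ∑ j ∈ C', P i j * q j + ∑ j ∈ A ∪ B, P i j * q j := by
      rw [← Finset.sum_compl_add_sum (A ∪ B) (fun j => P i j * q j)]
    have hAB' : ∑ j ∈ A ∪ B, P i j * q j = ∑ j ∈ B, P i j := by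
      rw [Finset.sum_union hAB]
      have h1 : ∑ j ∈ A, P i j * q j = 0 :=
        Finset.sum_eq_zero fun j hj => by rw [hqA j hj, mul_zero]
      have h2 : ∑ j ∈ B, P i j * q j = ∑ j ∈ B, P i j :=
        Finset.sum_congr rfl fun j hj => by rw [hqB j hj, mul_one]
      rw [h1, h2, zero_add]
    have hCsum : ∑ j ∈ C', P i j * q j = ∑ j : {x // x ∈ C'}, P i j.1 * g j := by
      rw [Finset.univ_eq_attach, ← Finset.sum_attach C' (fun j => P i j * q j)]
      exact Finset.sum_congr rfl fun j _ => by rw [hqC j.1 j.2]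
    rw [hsplit, hAB', hCsum, hqC i hi]
    have := hgeq ⟨i, hi⟩
    linarith
  refine ⟨q, ⟨hqharm, hqA, hqB⟩, ?_⟩
  rintro q' ⟨hq'C, hq'A, hq'B⟩
  have hd : ∀ i, q' i - q i = 0 := by
    apply harmzero P hnonneg hrow hirr A B hA (fun i => q' i - q i)
    · intro i hi
      rw [hq'C i hi, hqharm i hi, ← Finset.sum_sub_distrib]
      exact Finset.sum_congr rfl fun j _ => by ring
    · intro i hi
      rcases Finset.mem_union.mp hi with h | h
      · simp [hq'A i h, hqA i h]
      · simp [hq'B i h, hqB i h]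
  funext i
  have := hd i
  linarith
end

section
/- For a stationary Markov chain, the reactive current f^{AB}_{ij} = q⁻_i π_i P_{ij} q⁺_j satisfies a Kirchhoff-type conservation law at every node i ∈ C: Σ_j f^{AB}_{ij} = Σ_j f^{AB}_{ji}. -/
/-- **Kirchhoff-type conservation law for the reactive current.**
For a stationary Markov chain with invariant distribution `π`, transition matrix `P`,
time-reversed matrix `P⁻ i j = (π j / π i) * P j i`, forward committor `q⁺` and backward
committor `q⁻`, the reactive current `f^{AB}_{ij} = q⁻_i * π_i * P i j * q⁺_j` satisfies
`∑_j f^{AB}_{ij} = ∑_j f^{AB}_{ji}` at every node `i ∈ C = (A∪B)ᶜ`. -/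
theorem stmt8
    {S : Type*} [Fintype S] [DecidableEq S]
    (P : Matrix S S ℝ) (π : S → ℝ)
    (hnonneg : ∀ i j, 0 ≤ P i j)
    (hrow : ∀ i, ∑ j : S, P i j = 1)
    (hirr : ∀ i j : S, ∃ m : ℕ, 0 < m ∧ 0 < (P ^ m) i j)
    (hπpos : ∀ i, 0 < π i)
    (hπsum : ∑ i : S, π i = 1)
    (hinv : ∀ j, ∑ i : S, π i * P i j = π j)
    (A B : Finset S) (hA : A.Nonempty) (hB : B.Nonempty) (hAB : Disjoint A B)
    (qp qm : S → ℝ)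
    (hqpC : ∀ i ∈ ((A ∪ B)ᶜ : Finset S), qp i = ∑ j : S, P i j * qp j)
    (hqpA : ∀ i ∈ A, qp i = 0) (hqpB : ∀ i ∈ B, qp i = 1)
    (hqmC : ∀ i ∈ ((A ∪ B)ᶜ : Finset S),
      qm i = ∑ j : S, (π j / π i * P j i) * qm j)
    (hqmA : ∀ i ∈ A, qm i = 1) (hqmB : ∀ i ∈ B, qm i = 0) :
    ∀ i ∈ ((A ∪ B)ᶜ : Finset S),
      ∑ j : S, qm i * π i * P i j * qp j = ∑ j : S, qm j * π j * P j i * qp i := by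
  intro i hi
  have hπne : π i ≠ 0 := (hπpos i).ne'
  have hL : ∑ j : S, qm i * π i * P i j * qp j = qm i * π i * qp i := by
    calc ∑ j : S, qm i * π i * P i j * qp j
        = qm i * π i * ∑ j : S, P i j * qp j := by
          rw [Finset.mul_sum]; exact Finset.sum_congr rfl fun j _ => by ring
      _ = qm i * π i * qp i := by rw [← hqpC i hi]
  have hR : ∑ j : S, qm j * π j * P j i * qp i = qm i * π i * qp i := by
    calc ∑ j : S, qm j * π j * P j i * qp i
        = qp i * π i * ∑ j : S, (π j / π i * P j i) * qm j := by
          rw [Finset.mul_sum]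
          exact Finset.sum_congr rfl fun j _ => by field_simp
      _ = qp i * π i * qm i := by rw [← hqmC i hi]
      _ = qm i * π i * qp i := by ring
  rw [hL, hR]
end

section
/- For a stationary Markov chain, the total reactive current flowing out of A equals the total reactive current flowing into B: Σ_{i∈A, j∈S} f^{AB}_{ij} = Σ_{i∈S, j∈B} f^{AB}_{ij}. -/
/-- **Kirchhoff-type conservation law for the reactive current.**
For a stationary Markov chain with invariant distribution `π`, transition matrix `P`,
time-reversed matrix `P⁻ i j = (π j / π i) * P j i`, forward committor `q⁺` and backward
committor `q⁻`, the reactive current `f^{AB}_{ij} = q⁻_i * π_i * P i j * q⁺_j` satisfies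
the global balance: the total reactive current flowing out of `A` equals the total
reactive current flowing into `B`: `∑_{i∈A, j∈S} f^{AB}_{ij} = ∑_{i∈S, j∈B} f^{AB}_{ij}`. -/
theorem stmt9
    {S : Type*} [Fintype S] [DecidableEq S]
    (P : Matrix S S ℝ) (π : S → ℝ)
    (hnonneg : ∀ i j, 0 ≤ P i j)
    (hrow : ∀ i, ∑ j : S, P i j = 1)
    (hirr : ∀ i j : S, ∃ m : ℕ, 0 < m ∧ 0 < (P ^ m) i j)
    (hπpos : ∀ i, 0 < π i)
    (hπsum : ∑ i : S, π i = 1)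
    (hinv : ∀ j, ∑ i : S, π i * P i j = π j)
    (A B : Finset S) (hA : A.Nonempty) (hB : B.Nonempty) (hAB : Disjoint A B)
    (qp qm : S → ℝ)
    (hqpC : ∀ i ∈ ((A ∪ B)ᶜ : Finset S), qp i = ∑ j : S, P i j * qp j)
    (hqpA : ∀ i ∈ A, qp i = 0) (hqpB : ∀ i ∈ B, qp i = 1)
    (hqmC : ∀ i ∈ ((A ∪ B)ᶜ : Finset S),
      qm i = ∑ j : S, (π j / π i * P j i) * qm j)
    (hqmA : ∀ i ∈ A, qm i = 1) (hqmB : ∀ i ∈ B, qm i = 0) :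
    ∑ i ∈ A, ∑ j : S, qm i * π i * P i j * qp j =
      ∑ i : S, ∑ j ∈ B, qm i * π i * P i j * qp j := by
  set f : S → S → ℝ := fun i j => qm i * π i * P i j * qp j with hf
  have hfB : ∀ i ∈ B, ∀ j, f i j = 0 := by
    intro i hi j; simp [hf, hqmB i hi]
  have hfA : ∀ j ∈ A, ∀ i, f i j = 0 := by
    intro j hj i; simp [hf, hqpA j hj]
  have hC : ∀ i ∈ ((A ∪ B)ᶜ : Finset S), (∑ j, f i j) = ∑ j, f j i := by
    intro i hi
    have hπi : (π i) ≠ 0 := (hπpos i).ne'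
    have h1 : (∑ j, f i j) = (qm i * π i) * ∑ j, P i j * qp j := by
      rw [Finset.mul_sum]
      exact Finset.sum_congr rfl fun j _ => by simp [hf]; ring
    have h2 : (∑ j, f j i) = (qp i * π i) * ∑ j, (π j / π i * P j i) * qm j := by
      rw [Finset.mul_sum]
      refine Finset.sum_congr rfl fun j _ => ?_
      simp only [hf]
      field_simp
    rw [h1, ← hqpC i hi, h2, ← hqmC i hi]; ring
  have hsplit : ∀ g : S → ℝ,
      (∑ i ∈ A, g i) + (∑ i ∈ B, g i) + (∑ i ∈ ((A ∪ B)ᶜ : Finset S), g i)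
        = ∑ i, g i := by
    intro g
    rw [← Finset.sum_union hAB, Finset.sum_add_sum_compl]
  have hswap : (∑ i, ∑ j, f i j) = ∑ i, ∑ j, f j i := Finset.sum_comm
  have hB1 : (∑ i ∈ B, ∑ j, f i j) = 0 :=
    Finset.sum_eq_zero fun i hi => Finset.sum_eq_zero fun j _ => hfB i hi j
  have hA2 : (∑ i ∈ A, ∑ j, f j i) = 0 :=
    Finset.sum_eq_zero fun i hi => Finset.sum_eq_zero fun j _ => hfA i hi j
  have hC12 : (∑ i ∈ ((A ∪ B)ᶜ : Finset S), ∑ j, f i j)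
      = ∑ i ∈ ((A ∪ B)ᶜ : Finset S), ∑ j, f j i :=
    Finset.sum_congr rfl hC
  have key : (∑ i ∈ A, ∑ j, f i j) = ∑ i ∈ B, ∑ j, f j i := by
    have e1 := hsplit (fun i => ∑ j, f i j)
    have e2 := hsplit (fun i => ∑ j, f j i)
    rw [hB1] at e1
    rw [hA2] at e2
    rw [hC12] at e1
    linarith [hswap]
  rw [key]
  exact Finset.sum_comm
end

section
/- For an M-periodic forward committor of a periodically driven Markov chain, the closed one-period equation holds for i ∈ C: q⁺_{m,i} = Σ_{i_1,…,i_M ∈ C} P_{m,i i_1} P_{m+1, i_1 i_2} ⋯ P_{m+M−1, i_{M−1} i_M} q⁺_{m, i_M} + Σ_{τ=1}^{M} Σ_{i_1,…,i_{τ−1} ∈ C, i_τ ∈ B} P_{m, i i_1} ⋯ P_{m+τ−1, i_{τ−1} i_τ}. -/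
/-!
Expand the committor equation at the endpoint of every path that has stayed in `C` so far: one
more step either stays in `C`, enters `A` (contributing nothing, as `q = 0` there) or enters `B`
(contributing the path weight, as `q = 1` there). After `M` steps periodicity gives
`q (m + M) = q m`.
-/

namespace Committor

open Finset

variable {S : Type*} (P : ℕ → S → S → ℝ)

def pathWeight {L : ℕ} (r : Fin (L + 1) → S) : ℝ :=
  ∏ k : Fin L, P k (r k.castSucc) (r k.succ)

lemma pathWeight_snoc {L : ℕ} (r : Fin (L + 1) → S) (j : S) :
    pathWeight P (Fin.snoc r j : Fin (L + 2) → S) = pathWeight P r * P L (r (Fin.last L)) j := by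
  simp only [pathWeight, Fin.prod_univ_castSucc, Fin.succ_castSucc, Fin.snoc_castSucc,
    Fin.val_castSucc, Fin.succ_last, Fin.snoc_last, Fin.val_last]

section Snoc

variable (C : Finset S) {L : ℕ} (r : Fin (L + 1) → S) (j : S)

lemma snoc_mem_of_pos_iff :
    (∀ k : Fin (L + 2), 0 < (k : ℕ) → (Fin.snoc r j : Fin (L + 2) → S) k ∈ C) ↔
      (∀ k : Fin (L + 1), 0 < (k : ℕ) → r k ∈ C) ∧ j ∈ C := by
  rw [Fin.forall_fin_succ']
  simp

lemma snoc_mem_of_pos_of_lt_iff :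
    (∀ k : Fin (L + 2), 0 < (k : ℕ) → (k : ℕ) < L + 1 → (Fin.snoc r j : Fin (L + 2) → S) k ∈ C) ↔
      ∀ k : Fin (L + 1), 0 < (k : ℕ) → r k ∈ C := by
  rw [Fin.forall_fin_succ']
  simp [Fin.is_le]

end Snoc

variable {P} [DecidableEq S] {C B : Finset S} {q : ℕ → S → ℝ}

lemma survival_add_firstHit_summand_snoc (hBC : Disjoint B C)
    (hq_out : ∀ n, ∀ j ∉ C, q n j = if j ∈ B then 1 else 0)
    {L : ℕ} (i : S) (r : Fin (L + 1) → S) (j : S) :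
    ((if (Fin.snoc r j : Fin (L + 2) → S) 0 = i ∧
          ∀ k : Fin (L + 2), 0 < (k : ℕ) → (Fin.snoc r j : Fin (L + 2) → S) k ∈ C
        then pathWeight P (Fin.snoc r j : Fin (L + 2) → S) *
          q (L + 1) ((Fin.snoc r j : Fin (L + 2) → S) (Fin.last (L + 1)))
        else 0) +
      if (Fin.snoc r j : Fin (L + 2) → S) 0 = i ∧
          (∀ k : Fin (L + 2), 0 < (k : ℕ) → (k : ℕ) < L + 1 →
            (Fin.snoc r j : Fin (L + 2) → S) k ∈ C) ∧
          (Fin.snoc r j : Fin (L + 2) → S) (Fin.last (L + 1)) ∈ B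
        then pathWeight P (Fin.snoc r j : Fin (L + 2) → S) else 0) =
      if r 0 = i ∧ ∀ k : Fin (L + 1), 0 < (k : ℕ) → r k ∈ C
      then pathWeight P r * (P L (r (Fin.last L)) j * q (L + 1) j) else 0 := by
  have h0 : (Fin.snoc r j : Fin (L + 2) → S) 0 = r 0 := Fin.snoc_castSucc (i := 0) ..
  simp only [h0, snoc_mem_of_pos_iff, snoc_mem_of_pos_of_lt_iff, pathWeight_snoc, Fin.snoc_last]
  by_cases hjC : j ∈ C
  · simp [hjC, disjoint_right.mp hBC hjC, mul_assoc]
  · by_cases hjB : j ∈ B <;> simp [hjC, hjB, hq_out _ j hjC]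

variable [Fintype S] (P C B q)

def survivalSum (L : ℕ) (i : S) : ℝ :=
  ∑ r : Fin (L + 1) → S,
    if r 0 = i ∧ ∀ k : Fin (L + 1), 0 < (k : ℕ) → r k ∈ C
    then pathWeight P r * q L (r (Fin.last L)) else 0

def firstHitSum (τ : ℕ) (i : S) : ℝ :=
  ∑ r : Fin (τ + 1) → S,
    if r 0 = i ∧ (∀ k : Fin (τ + 1), 0 < (k : ℕ) → (k : ℕ) < τ → r k ∈ C) ∧ r (Fin.last τ) ∈ B
    then pathWeight P r else 0

lemma survivalSum_zero (i : S) : survivalSum P C q 0 i = q 0 i := by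
  rw [survivalSum, ← (Equiv.funUnique (Fin 1) S).symm.sum_comp]
  simp [pathWeight]

variable {P C B q}

lemma survivalSum_eq_survivalSum_succ_add_firstHitSum (hBC : Disjoint B C)
    (hq : ∀ n, ∀ i ∈ C, q n i = ∑ j, P n i j * q (n + 1) j)
    (hq_out : ∀ n, ∀ j ∉ C, q n j = if j ∈ B then 1 else 0)
    {L : ℕ} {i : S} (hi : i ∈ C) :
    survivalSum P C q L i = survivalSum P C q (L + 1) i + firstHitSum P C B (L + 1) i := by
  have hlast : ∀ r : Fin (L + 1) → S, r 0 = i → (∀ k : Fin (L + 1), 0 < (k : ℕ) → r k ∈ C) →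
      r (Fin.last L) ∈ C := by
    intro r h0 hr
    rcases L.eq_zero_or_pos with rfl | hL
    · exact h0 ▸ hi
    · exact hr _ hL
  have expand : survivalSum P C q L i = ∑ r : Fin (L + 1) → S, ∑ j,
      if r 0 = i ∧ ∀ k : Fin (L + 1), 0 < (k : ℕ) → r k ∈ C
      then pathWeight P r * (P L (r (Fin.last L)) j * q (L + 1) j) else 0 := by
    refine sum_congr rfl fun r _ ↦ ?_
    split_ifs with hr
    · rw [hq _ _ (hlast r hr.1 hr.2), mul_sum]
    · simp
  rw [expand, sum_comm, survivalSum, firstHitSum, ← sum_add_distrib,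
    ← Equiv.sum_comp (Fin.snocEquiv fun _ : Fin (L + 2) ↦ S), Fintype.sum_prod_type]
  exact sum_congr rfl fun j _ ↦ sum_congr rfl fun r _ ↦
    (survival_add_firstHit_summand_snoc hBC hq_out i r j).symm

lemma eq_survivalSum_add_sum_firstHitSum (hBC : Disjoint B C)
    (hq : ∀ n, ∀ i ∈ C, q n i = ∑ j, P n i j * q (n + 1) j)
    (hq_out : ∀ n, ∀ j ∉ C, q n j = if j ∈ B then 1 else 0)
    {i : S} (hi : i ∈ C) (L : ℕ) :
    q 0 i = survivalSum P C q L i + ∑ τ ∈ Icc 1 L, firstHitSum P C B τ i := by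
  induction L with
  | zero => simp [survivalSum_zero]
  | succ L ih =>
    rw [sum_Icc_succ_top (by omega), ih,
      survivalSum_eq_survivalSum_succ_add_firstHitSum hBC hq hq_out hi]
    ring

end Committor

theorem stmt12_general
    {S : Type*} [Fintype S] [DecidableEq S] (M : ℕ)
    (P : ZMod M → S → S → ℝ)
    (A B : Finset S) (hAB : Disjoint A B)
    (q : ZMod M → S → ℝ)
    (hqC : ∀ m : ZMod M, ∀ i ∈ ((A ∪ B)ᶜ : Finset S),
      q m i = ∑ j : S, P m i j * q (m + 1) j)
    (hqA : ∀ m : ZMod M, ∀ i ∈ A, q m i = 0)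
    (hqB : ∀ m : ZMod M, ∀ i ∈ B, q m i = 1) :
    ∀ m : ZMod M, ∀ i ∈ ((A ∪ B)ᶜ : Finset S),
      q m i =
        (∑ r : Fin (M + 1) → S,
          if r 0 = i ∧ (∀ k : Fin (M + 1), 0 < (k : ℕ) → r k ∈ ((A ∪ B)ᶜ : Finset S))
          then (∏ k : Fin M, P (m + ((k : ℕ) : ZMod M)) (r k.castSucc) (r k.succ)) *
            q m (r (Fin.last M))
          else 0) +
        ∑ τ ∈ Finset.Icc 1 M,
          ∑ r : Fin (τ + 1) → S,
            if r 0 = i ∧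
                (∀ k : Fin (τ + 1), 0 < (k : ℕ) → (k : ℕ) < τ →
                  r k ∈ ((A ∪ B)ᶜ : Finset S)) ∧
                r (Fin.last τ) ∈ B
            then ∏ k : Fin τ, P (m + ((k : ℕ) : ZMod M)) (r k.castSucc) (r k.succ)
            else 0 := by
  intro m i hi
  have hBC : Disjoint B (A ∪ B)ᶜ := disjoint_compl_right_iff.mpr Finset.subset_union_right
  have hq : ∀ n : ℕ, ∀ i ∈ (A ∪ B)ᶜ,
      q (m + n) i = ∑ j, P (m + n) i j * q (m + (n + 1 : ℕ)) j := by
    intro n i hi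
    rw [hqC _ _ hi, Nat.cast_succ, add_assoc]
  have hq_out : ∀ n : ℕ, ∀ j ∉ (A ∪ B)ᶜ, q (m + n) j = if j ∈ B then 1 else 0 := by
    intro n j hj
    rw [Finset.mem_compl, not_not, Finset.mem_union] at hj
    rcases hj with hjA | hjB
    · simp [hqA _ _ hjA, Finset.disjoint_left.mp hAB hjA]
    · simp [hqB _ _ hjB, hjB]
  have h := Committor.eq_survivalSum_add_sum_firstHitSum (P := fun n ↦ P (m + n))
    (q := fun n ↦ q (m + n)) hBC hq hq_out hi M
  rw [Committor.survivalSum] at h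
  simp only [Nat.cast_zero, add_zero, ZMod.natCast_self] at h
  exact h

/-- **Closed one-period equation for the M-periodic forward committor.**
If the `M`-periodic forward committor `q` satisfies `q_{m,i} = ∑_j P_{m,ij} q_{m+1,j}`
on `C = (A∪B)ᶜ`, with `q = 0` on `A` and `q = 1` on `B` (periodic boundary conditions
being automatic over `ZMod M`), then for `i ∈ C`:
`q_{m,i} = ∑_{i_1,…,i_M ∈ C} P_{m,i i_1} ⋯ P_{m+M−1, i_{M−1} i_M} q_{m, i_M}
 + ∑_{τ=1}^{M} ∑_{i_1,…,i_{τ−1} ∈ C, i_τ ∈ B} P_{m, i i_1} ⋯ P_{m+τ−1, i_{τ−1} i_τ}`.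
Paths are encoded as `r : Fin (L+1) → S` with `r 0 = i`. -/
theorem stmt12
    {S : Type*} [Fintype S] [DecidableEq S] (M : ℕ) [NeZero M]
    (P : ZMod M → S → S → ℝ)
    (hnonneg : ∀ m i j, 0 ≤ P m i j)
    (hrow : ∀ m i, ∑ j : S, P m i j = 1)
    (A B : Finset S) (hA : A.Nonempty) (hB : B.Nonempty) (hAB : Disjoint A B)
    (q : ZMod M → S → ℝ)
    (hqC : ∀ m : ZMod M, ∀ i ∈ ((A ∪ B)ᶜ : Finset S),
      q m i = ∑ j : S, P m i j * q (m + 1) j)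
    (hqA : ∀ m : ZMod M, ∀ i ∈ A, q m i = 0)
    (hqB : ∀ m : ZMod M, ∀ i ∈ B, q m i = 1) :
    ∀ m : ZMod M, ∀ i ∈ ((A ∪ B)ᶜ : Finset S),
      q m i =
        (∑ r : Fin (M + 1) → S,
          if r 0 = i ∧ (∀ k : Fin (M + 1), 0 < (k : ℕ) → r k ∈ ((A ∪ B)ᶜ : Finset S))
          then (∏ k : Fin M, P (m + ((k : ℕ) : ZMod M)) (r k.castSucc) (r k.succ)) *
            q m (r (Fin.last M))
          else 0) +
        ∑ τ ∈ Finset.Icc 1 M,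
          ∑ r : Fin (τ + 1) → S,
            if r 0 = i ∧
                (∀ k : Fin (τ + 1), 0 < (k : ℕ) → (k : ℕ) < τ →
                  r k ∈ ((A ∪ B)ᶜ : Finset S)) ∧
                r (Fin.last τ) ∈ B
            then ∏ k : Fin τ, P (m + ((k : ℕ) : ZMod M)) (r k.castSucc) (r k.succ)
            else 0 :=
  stmt12_general M P A B hAB q hqC hqA hqB
end

section
/- If P̄_0 = P_0 P_1 ⋯ P_{M−1} is irreducible, then the M-periodic forward committor system (q⁺_{m,i} = Σ_j P_{m,ij} q⁺_{m+1,j} on C, 0 on A, 1 on B, with q⁺_M = q⁺_0) has a unique solution. In particular, the matrix I − D, where D = P_0|_{C→C} ⋯ P_{M−1}|_{C→C} is the product of the restrictions of the P_m to C, is invertible. -/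
/-- The restriction `Q|_{C→C}` of a matrix to rows and columns in the subset `C`. -/
def restrictC {S : Type*} [Fintype S] [DecidableEq S] (C : Finset S)
    (Q : Matrix S S ℝ) : Matrix {x : S // x ∈ C} {x : S // x ∈ C} ℝ :=
  Q.submatrix Subtype.val Subtype.val

/-- The one-period transition matrix `P̄_m = P_m P_{m+1} ⋯ P_{m+M−1}`. -/
def periodProd' {S : Type*} [Fintype S] [DecidableEq S] {M : ℕ} [NeZero M]
    (P : ZMod M → Matrix S S ℝ) (m : ZMod M) : Matrix S S ℝ :=
  (List.ofFn fun k : Fin M => P (m + ((k : ℕ) : ZMod M))).prod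


open Matrix Finset

section Aux

variable {S : Type*} [Fintype S] [DecidableEq S]

lemma listProd_nonneg (L : List (Matrix S S ℝ)) (h : ∀ Q ∈ L, ∀ i j, 0 ≤ Q i j) :
    ∀ i j, 0 ≤ L.prod i j := by
  induction L with
  | nil =>
    intro i j
    by_cases hij : i = j <;> simp [Matrix.one_apply, hij]
  | cons Q L ih =>
    intro i j
    simp only [List.prod_cons, Matrix.mul_apply]
    exact Finset.sum_nonneg fun k _ => mul_nonneg (h Q (by simp) i k)
      (ih (fun R hR => h R (by simp [hR])) k j)

lemma listProd_rowsum (L : List (Matrix S S ℝ)) (h : ∀ Q ∈ L, ∀ i, ∑ j : S, Q i j = 1) :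
    ∀ i, ∑ j : S, L.prod i j = 1 := by
  induction L with
  | nil => intro i; simp [Matrix.one_apply]
  | cons Q L ih =>
    intro i
    have ih' := ih (fun R hR => h R (by simp [hR]))
    calc ∑ j : S, (Q * L.prod) i j = ∑ j : S, ∑ k : S, Q i k * L.prod k j := by
          simp [Matrix.mul_apply]
      _ = ∑ k : S, ∑ j : S, Q i k * L.prod k j := Finset.sum_comm
      _ = ∑ k : S, Q i k * ∑ j : S, L.prod k j := by simp [Finset.mul_sum]
      _ = ∑ k : S, Q i k := by
          refine Finset.sum_congr rfl fun k _ => by rw [ih' k, mul_one]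
      _ = 1 := h Q (by simp) i

lemma restrict_listProd (C : Finset S) (L : List (Matrix S S ℝ))
    (h : ∀ Q ∈ L, ∀ i j, 0 ≤ Q i j) :
    ∀ i j : {x : S // x ∈ C}, 0 ≤ (L.map (restrictC C)).prod i j ∧
      (L.map (restrictC C)).prod i j ≤ L.prod i.val j.val := by
  induction L with
  | nil =>
    intro i j
    constructor
    · by_cases hij : i = j <;> simp [Matrix.one_apply, hij]
    · by_cases hij : i = j
      · simp [hij, Matrix.one_apply]
      · have hv : i.val ≠ j.val := fun hv => hij (Subtype.ext hv)
        simp [Matrix.one_apply, hij, hv]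
  | cons Q L ih =>
    intro i j
    have hL : ∀ R ∈ L, ∀ i j, 0 ≤ R i j := fun R hR => h R (by simp [hR])
    have hQ : ∀ i j, 0 ≤ Q i j := h Q (by simp)
    have ih' := ih hL
    have hLP := listProd_nonneg L hL
    have hres : ∀ (k : {x : S // x ∈ C}), restrictC C Q i k = Q i.val k.val := fun k => rfl
    simp only [List.map_cons, List.prod_cons, Matrix.mul_apply]
    constructor
    · refine Finset.sum_nonneg fun k _ => ?_
      rw [hres k]
      exact mul_nonneg (hQ i.val k.val) (ih' k j).1
    · calc ∑ k : {x : S // x ∈ C}, restrictC C Q i k * (L.map (restrictC C)).prod k j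
          ≤ ∑ k : {x : S // x ∈ C}, Q i.val k.val * L.prod k.val j.val := by
            refine Finset.sum_le_sum fun k _ => ?_
            rw [hres k]
            exact mul_le_mul_of_nonneg_left (ih' k j).2 (hQ i.val k.val)
        _ = ∑ k ∈ C, Q i.val k * L.prod k j.val :=
            Finset.sum_coe_sort C (fun k => Q i.val k * L.prod k j.val)
        _ ≤ ∑ k : S, Q i.val k * L.prod k j.val := by
            refine Finset.sum_le_sum_of_subset_of_nonneg (Finset.subset_univ C)
              fun k _ _ => mul_nonneg (hQ i.val k) (hLP k j.val)

lemma chain_prod {ι : Type*} [Fintype ι] [DecidableEq ι]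
    (F : ℕ → Matrix ι ι ℝ) (y : ℕ → ι → ℝ)
    (h : ∀ n, y n = (F n) *ᵥ y (n + 1)) :
    ∀ k n, y n = (List.ofFn fun i : Fin k => F (n + (i : ℕ))).prod *ᵥ y (n + k) := by
  intro k
  induction k with
  | zero => intro n; simp
  | succ k ih =>
    intro n
    have hfe : (fun i : Fin k => F (n + ((i.succ : Fin (k+1)) : ℕ)))
        = fun i : Fin k => F (n + 1 + (i : ℕ)) := by
      funext i
      have : ((i.succ : Fin (k+1)) : ℕ) = (i : ℕ) + 1 := rfl
      rw [this, show n + ((i:ℕ) + 1) = n + 1 + (i:ℕ) by omega]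
    have hprod : (List.ofFn fun i : Fin (k + 1) => F (n + (i : ℕ))).prod
        = F n * (List.ofFn fun i : Fin k => F (n + 1 + (i : ℕ))).prod := by
      rw [List.ofFn_succ, List.prod_cons]
      simp only [Fin.val_zero, Nat.add_zero]
      rw [hfe]
    have hnk : n + 1 + k = n + (k + 1) := by omega
    rw [hprod, ← Matrix.mulVec_mulVec, ← hnk, ← ih (n + 1), h n]

end Aux

section Main

variable {S : Type*} [Fintype S] [DecidableEq S] {M : ℕ} [NeZero M]

/-- Kernel triviality: `x = D x` forces `x = 0`. -/
lemma ker_triv (P : ZMod M → Matrix S S ℝ)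
    (hnonneg : ∀ m i j, 0 ≤ P m i j)
    (hrow : ∀ m i, ∑ j : S, P m i j = 1)
    (hirr : ∀ i j : S, ∃ n : ℕ, 0 < n ∧ 0 < ((periodProd' P 0) ^ n) i j)
    (A B : Finset S) (hB : B.Nonempty) (hC : ((A ∪ B)ᶜ : Finset S).Nonempty)
    (x : {s : S // s ∈ ((A ∪ B)ᶜ : Finset S)} → ℝ)
    (hx : x = (List.ofFn fun k : Fin M =>
      restrictC ((A ∪ B)ᶜ : Finset S) (P ((k : ℕ) : ZMod M))).prod *ᵥ x) :
    x = 0 := by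
  have hCfdef : ((A ∪ B)ᶜ : Finset S) = (A ∪ B)ᶜ := rfl
  set L0 : List (Matrix S S ℝ) := List.ofFn fun k : Fin M => P ((k : ℕ) : ZMod M) with hL0
  have hDmat : (List.ofFn fun k : Fin M => restrictC ((A ∪ B)ᶜ : Finset S) (P ((k:ℕ):ZMod M))).prod
      = (L0.map (restrictC ((A ∪ B)ᶜ : Finset S))).prod := by rw [hL0, List.map_ofFn]; rfl
  set Dmat : Matrix {s : S // s ∈ ((A ∪ B)ᶜ : Finset S)} {s : S // s ∈ ((A ∪ B)ᶜ : Finset S)} ℝ := (L0.map (restrictC ((A ∪ B)ᶜ : Finset S))).prod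
    with hD
  rw [hDmat] at hx
  have hpow : ∀ n : ℕ, (Dmat ^ n) *ᵥ x = x := by
    intro n
    induction n with
    | zero => simp
    | succ n ih => rw [pow_succ, ← Matrix.mulVec_mulVec, ← hx, ih]
  obtain ⟨c0, hc0⟩ := hC
  haveI : Nonempty {s : S // s ∈ ((A ∪ B)ᶜ : Finset S)} := ⟨⟨c0, hc0⟩⟩
  obtain ⟨i0, -, hmax⟩ := Finset.exists_max_image (Finset.univ : Finset {s : S // s ∈ ((A ∪ B)ᶜ : Finset S)})
    (fun i => |x i|) Finset.univ_nonempty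
  obtain ⟨b, hb⟩ := hB
  obtain ⟨n, -, hpos⟩ := hirr i0.val b
  set JL : List (Matrix S S ℝ) := (List.replicate n L0).flatten with hJL
  have hmemJL : ∀ Q ∈ JL, ∃ k : Fin M, Q = P ((k:ℕ) : ZMod M) := by
    intro Q hQ
    rw [hJL, List.mem_flatten] at hQ
    obtain ⟨l, hl, hQl⟩ := hQ
    rw [List.mem_replicate] at hl
    rw [hl.2, hL0, List.mem_ofFn] at hQl
    obtain ⟨k, hk⟩ := hQl
    exact ⟨k, hk.symm⟩
  have hJnonneg : ∀ Q ∈ JL, ∀ i j, 0 ≤ Q i j := by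
    intro Q hQ
    obtain ⟨k, rfl⟩ := hmemJL Q hQ
    exact hnonneg _
  have hJrow : ∀ Q ∈ JL, ∀ i, ∑ j : S, Q i j = 1 := by
    intro Q hQ
    obtain ⟨k, rfl⟩ := hmemJL Q hQ
    exact hrow _
  have hPP : periodProd' P 0 = L0.prod := by
    rw [periodProd', hL0]
    simp only [zero_add]
  have hJprod : JL.prod = (periodProd' P 0) ^ n := by
    rw [hJL, List.prod_flatten, List.map_replicate, List.prod_replicate, hPP]
  have hJres : (JL.map (restrictC ((A ∪ B)ᶜ : Finset S))).prod = Dmat ^ n := by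
    rw [hJL, List.map_flatten, List.map_replicate, List.prod_flatten, List.map_replicate,
      List.prod_replicate, hD]
  have hble := restrict_listProd ((A ∪ B)ᶜ : Finset S) JL hJnonneg
  have hJP := listProd_nonneg JL hJnonneg
  have hrow1 : ∑ j : S, JL.prod i0.val j = 1 := listProd_rowsum JL hJrow i0.val
  have hbnotC : b ∉ ((A ∪ B)ᶜ : Finset S) := by
    rw [Finset.mem_compl]
    simp [Finset.mem_union, hb]
  have hsub : ((A ∪ B)ᶜ : Finset S) ⊆ Finset.univ.erase b := by
    intro k hk
    rw [Finset.mem_erase]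
    exact ⟨fun h => hbnotC (h ▸ hk), Finset.mem_univ k⟩
  have hDn_nonneg : ∀ j, 0 ≤ (Dmat ^ n) i0 j := by
    intro j
    rw [← hJres]
    exact (hble i0 j).1
  have hkey : ∑ j : {s : S // s ∈ ((A ∪ B)ᶜ : Finset S)}, (Dmat ^ n) i0 j < 1 := by
    have h1 : ∑ j : {s : S // s ∈ ((A ∪ B)ᶜ : Finset S)}, (Dmat ^ n) i0 j
        ≤ ∑ j : {s : S // s ∈ ((A ∪ B)ᶜ : Finset S)}, JL.prod i0.val j.val := by
      rw [← hJres]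
      exact Finset.sum_le_sum fun j _ => (hble i0 j).2
    have h2 : ∑ j : {s : S // s ∈ ((A ∪ B)ᶜ : Finset S)}, JL.prod i0.val j.val = ∑ j ∈ ((A ∪ B)ᶜ : Finset S), JL.prod i0.val j :=
      Finset.sum_coe_sort ((A ∪ B)ᶜ : Finset S) (fun j => JL.prod i0.val j)
    have h3 : ∑ j ∈ ((A ∪ B)ᶜ : Finset S), JL.prod i0.val j ≤ ∑ j ∈ Finset.univ.erase b, JL.prod i0.val j :=
      Finset.sum_le_sum_of_subset_of_nonneg hsub (fun j _ _ => hJP i0.val j)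
    have h4 := Finset.sum_erase_add Finset.univ (fun j => JL.prod i0.val j) (Finset.mem_univ b)
    have h5 : 0 < JL.prod i0.val b := by rw [hJprod]; exact hpos
    have h6 : ∑ j ∈ Finset.univ.erase b, JL.prod i0.val j = 1 - JL.prod i0.val b := by
      linarith [hrow1]
    linarith
  have hx0 : |x i0| ≤ (∑ j : {s : S // s ∈ ((A ∪ B)ᶜ : Finset S)}, (Dmat ^ n) i0 j) * |x i0| := by
    calc |x i0| = |((Dmat ^ n) *ᵥ x) i0| := by rw [hpow n]
      _ = |∑ j, (Dmat ^ n) i0 j * x j| := by simp [Matrix.mulVec, dotProduct]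
      _ ≤ ∑ j, |(Dmat ^ n) i0 j * x j| := Finset.abs_sum_le_sum_abs _ _
      _ = ∑ j, (Dmat ^ n) i0 j * |x j| := by
          refine Finset.sum_congr rfl fun j _ => ?_
          rw [abs_mul, abs_of_nonneg (hDn_nonneg j)]
      _ ≤ ∑ j, (Dmat ^ n) i0 j * |x i0| := Finset.sum_le_sum fun j _ =>
          mul_le_mul_of_nonneg_left (hmax j (Finset.mem_univ j)) (hDn_nonneg j)
      _ = (∑ j, (Dmat ^ n) i0 j) * |x i0| := by rw [Finset.sum_mul]
  have hmax0 : |x i0| = 0 := by nlinarith [abs_nonneg (x i0)]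
  funext j
  have h7 := hmax j (Finset.mem_univ j)
  have h8 := abs_nonneg (x j)
  have : |x j| = 0 := le_antisymm (hmax0 ▸ h7) h8
  simpa using abs_eq_zero.mp this

/-- invertibility of `1 - D` -/
lemma isUnit_one_sub_D (P : ZMod M → Matrix S S ℝ)
    (hnonneg : ∀ m i j, 0 ≤ P m i j)
    (hrow : ∀ m i, ∑ j : S, P m i j = 1)
    (hirr : ∀ i j : S, ∃ n : ℕ, 0 < n ∧ 0 < ((periodProd' P 0) ^ n) i j)
    (A B : Finset S) (hB : B.Nonempty) (hC : ((A ∪ B)ᶜ : Finset S).Nonempty) :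
    IsUnit (1 - (List.ofFn fun k : Fin M =>
      restrictC ((A ∪ B)ᶜ : Finset S) (P ((k : ℕ) : ZMod M))).prod) := by
  set Dm := (List.ofFn fun k : Fin M =>
    restrictC ((A ∪ B)ᶜ : Finset S) (P ((k : ℕ) : ZMod M))).prod with hDm
  have hdet : (1 - Dm).det ≠ 0 := by
    intro h0
    obtain ⟨v, hv, hveq⟩ := (Matrix.exists_mulVec_eq_zero_iff).mpr h0
    apply hv
    apply ker_triv P hnonneg hrow hirr A B hB hC v
    rw [Matrix.sub_mulVec, Matrix.one_mulVec, sub_eq_zero] at hveq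
    rw [← hDm]
    exact hveq
  exact (Matrix.isUnit_iff_isUnit_det _).mpr (isUnit_iff_ne_zero.mpr hdet)

/-- vanishing of periodic chains -/
lemma chain_vanish (P : ZMod M → Matrix S S ℝ)
    (hnonneg : ∀ m i j, 0 ≤ P m i j)
    (hrow : ∀ m i, ∑ j : S, P m i j = 1)
    (hirr : ∀ i j : S, ∃ n : ℕ, 0 < n ∧ 0 < ((periodProd' P 0) ^ n) i j)
    (A B : Finset S) (hB : B.Nonempty) (hC : ((A ∪ B)ᶜ : Finset S).Nonempty)
    (y : ℕ → {s : S // s ∈ ((A ∪ B)ᶜ : Finset S)} → ℝ)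
    (hrec : ∀ n : ℕ, y n = restrictC ((A ∪ B)ᶜ : Finset S) (P ((n : ℕ) : ZMod M)) *ᵥ y (n + 1))
    (hper : y M = y 0) :
    ∀ n ≤ M, y n = 0 := by
  have hch := chain_prod (fun n : ℕ => restrictC ((A ∪ B)ᶜ : Finset S) (P ((n : ℕ) : ZMod M)))
    y hrec
  have h0 := hch M 0
  simp only [Nat.zero_add] at h0
  rw [hper] at h0
  have hy0 : y 0 = 0 := ker_triv P hnonneg hrow hirr A B hB hC (y 0) h0
  intro n hn
  have hn' := hch (M - n) n
  rw [show n + (M - n) = M by omega, hper, hy0, Matrix.mulVec_zero] at hn'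
  exact hn'

end Main

/-- **Existence and uniqueness of the M-periodic forward committor.**
If `P̄_0 = P_0 P_1 ⋯ P_{M−1}` is irreducible, the `M`-periodic forward committor system
(`q_{m,i} = ∑_j P_{m,ij} q_{m+1,j}` on `C = (A∪B)ᶜ`, `0` on `A`, `1` on `B`, with the
periodic boundary condition built into `ZMod M`) has a unique solution; in particular
`I − D` is invertible, where `D = P_0|_{C→C} ⋯ P_{M−1}|_{C→C}`. -/
theorem stmt13
    {S : Type*} [Fintype S] [DecidableEq S] (M : ℕ) [NeZero M]
    (P : ZMod M → Matrix S S ℝ)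
    (hnonneg : ∀ m i j, 0 ≤ P m i j)
    (hrow : ∀ m i, ∑ j : S, P m i j = 1)
    (hirr : ∀ i j : S, ∃ n : ℕ, 0 < n ∧ 0 < ((periodProd' P 0) ^ n) i j)
    (A B : Finset S) (hA : A.Nonempty) (hB : B.Nonempty) (hAB : Disjoint A B)
    (hC : ((A ∪ B)ᶜ : Finset S).Nonempty) :
    (∃! q : ZMod M → S → ℝ,
      (∀ m : ZMod M, ∀ i ∈ ((A ∪ B)ᶜ : Finset S),
        q m i = ∑ j : S, P m i j * q (m + 1) j) ∧
      (∀ m : ZMod M, ∀ i ∈ A, q m i = 0) ∧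
      (∀ m : ZMod M, ∀ i ∈ B, q m i = 1)) ∧
    IsUnit (1 - (List.ofFn fun k : Fin M =>
      restrictC ((A ∪ B)ᶜ : Finset S) (P ((k : ℕ) : ZMod M))).prod) := by
  classical
  refine ⟨?_, isUnit_one_sub_D P hnonneg hrow hirr A B hB hC⟩
  -- some facts about membership
  have hnotC : ∀ i : S, i ∉ ((A ∪ B)ᶜ : Finset S) → i ∈ A ∨ i ∈ B := by
    intro i hi
    rw [Finset.mem_compl, not_not, Finset.mem_union] at hi
    exact hi
  have hAnotC : ∀ i ∈ A, i ∉ ((A ∪ B)ᶜ : Finset S) := by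
    intro i hi
    rw [Finset.mem_compl, not_not, Finset.mem_union]
    exact Or.inl hi
  have hBnotC : ∀ i ∈ B, i ∉ ((A ∪ B)ᶜ : Finset S) := by
    intro i hi
    rw [Finset.mem_compl, not_not, Finset.mem_union]
    exact Or.inr hi
  have hAnotB : ∀ i ∈ A, i ∉ B := fun i hi => Finset.disjoint_left.mp hAB hi
  -- the linear endomorphism T
  let Tl : (ZMod M → {s : S // s ∈ ((A ∪ B)ᶜ : Finset S)} → ℝ) →ₗ[ℝ]
      (ZMod M → {s : S // s ∈ ((A ∪ B)ᶜ : Finset S)} → ℝ) :=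
    { toFun := fun x m => restrictC ((A ∪ B)ᶜ : Finset S) (P m) *ᵥ x (m + 1)
      map_add' := by
        intro x y
        funext m
        simp [Matrix.mulVec_add]
      map_smul' := by
        intro c x
        funext m
        simp [Matrix.mulVec_smul] }
  have hTapp : ∀ x m, Tl x m = restrictC ((A ∪ B)ᶜ : Finset S) (P m) *ᵥ x (m + 1) :=
    fun x m => rfl
  let G : (ZMod M → {s : S // s ∈ ((A ∪ B)ᶜ : Finset S)} → ℝ) →ₗ[ℝ]
      (ZMod M → {s : S // s ∈ ((A ∪ B)ᶜ : Finset S)} → ℝ) := LinearMap.id - Tl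
  have hGapp : ∀ x m i, G x m i = x m i - Tl x m i := fun x m i => rfl
  -- injectivity of 1 - T
  have hTinj : Function.Injective G := by
    intro a b hab
    have hz : G (a - b) = 0 := by rw [map_sub, hab, sub_self]
    have hz' : ∀ m : ZMod M,
        (a - b) m = restrictC ((A ∪ B)ᶜ : Finset S) (P m) *ᵥ (a - b) (m + 1) := by
      intro m
      have h1 : ∀ i, (a - b) m i - Tl (a - b) m i = 0 := by
        intro i
        rw [← hGapp]
        rw [hz]
        rfl
      funext i
      have h2 := h1 i
      rw [sub_eq_zero] at h2
      rw [h2, hTapp]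
    have hab0 : ∀ m : ZMod M, (a - b) m = 0 := by
      intro m
      have hrec : ∀ n : ℕ, (fun n : ℕ => (a - b) ((n : ℕ) : ZMod M)) n
          = restrictC ((A ∪ B)ᶜ : Finset S) (P ((n : ℕ) : ZMod M)) *ᵥ
            (fun n : ℕ => (a - b) ((n : ℕ) : ZMod M)) (n + 1) := by
        intro n
        have := hz' ((n : ℕ) : ZMod M)
        simpa [Nat.cast_add, Nat.cast_one] using this
      have hper : (fun n : ℕ => (a - b) ((n : ℕ) : ZMod M)) M
          = (fun n : ℕ => (a - b) ((n : ℕ) : ZMod M)) 0 := by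
        simp [ZMod.natCast_self]
      have hv := chain_vanish P hnonneg hrow hirr A B hB hC _ hrec hper m.val
        (le_of_lt (ZMod.val_lt m))
      simpa [ZMod.natCast_val, ZMod.cast_id] using hv
    have : a - b = 0 := funext hab0
    exact sub_eq_zero.mp this
  -- surjectivity
  have hTsurj : Function.Surjective G :=
    LinearMap.injective_iff_surjective.mp hTinj
  obtain ⟨x, hxeq⟩ := hTsurj (fun m (i : {s : S // s ∈ ((A ∪ B)ᶜ : Finset S)}) =>
    ∑ j ∈ B, P m i.val j)
  have hxm : ∀ m (i : {s : S // s ∈ ((A ∪ B)ᶜ : Finset S)}),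
      x m i = (restrictC ((A ∪ B)ᶜ : Finset S) (P m) *ᵥ x (m + 1)) i + ∑ j ∈ B, P m i.val j := by
    intro m i
    have h1 : x m i - Tl x m i = ∑ j ∈ B, P m i.val j := by
      rw [← hGapp, hxeq]
    rw [hTapp] at h1
    linarith
  -- the committor
  set q : ZMod M → S → ℝ := fun m i =>
    if h : i ∈ ((A ∪ B)ᶜ : Finset S) then x m ⟨i, h⟩ else if i ∈ B then 1 else 0 with hq
  have hqC : ∀ m : ZMod M, ∀ (i : S) (h : i ∈ ((A ∪ B)ᶜ : Finset S)), q m i = x m ⟨i, h⟩ := by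
    intro m i h
    simp only [hq]
    rw [dif_pos h]
  have hqA : ∀ m : ZMod M, ∀ i ∈ A, q m i = 0 := by
    intro m i hi
    simp only [hq]
    rw [dif_neg (hAnotC i hi), if_neg (hAnotB i hi)]
  have hqB : ∀ m : ZMod M, ∀ i ∈ B, q m i = 1 := by
    intro m i hi
    simp only [hq]
    rw [dif_neg (hBnotC i hi), if_pos hi]
  -- the sum splitting computation, for an arbitrary function
  have hsplit : ∀ (m : ZMod M) (i : S) (g : S → ℝ),
      ∑ j : S, P m i j * g j = (∑ j ∈ ((A ∪ B)ᶜ : Finset S), P m i j * g j) +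
        ((∑ j ∈ A, P m i j * g j) + (∑ j ∈ B, P m i j * g j)) := by
    intro m i g
    rw [← Finset.sum_union hAB, add_comm]
    exact (Finset.sum_add_sum_compl (A ∪ B) (fun j => P m i j * g j)).symm
  have hsumC : ∀ (m : ZMod M) (i : S) (h : i ∈ ((A ∪ B)ᶜ : Finset S))
      (v : {s : S // s ∈ ((A ∪ B)ᶜ : Finset S)} → ℝ),
      ∑ j ∈ ((A ∪ B)ᶜ : Finset S), P m i j * (fun j' => if h' : j' ∈ ((A ∪ B)ᶜ : Finset S)
        then v ⟨j', h'⟩ else (0:ℝ)) j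
        = (restrictC ((A ∪ B)ᶜ : Finset S) (P m) *ᵥ v) ⟨i, h⟩ := by
    intro m i h v
    rw [Matrix.mulVec, dotProduct]
    rw [← Finset.sum_coe_sort ((A ∪ B)ᶜ : Finset S)
      (fun j => P m i j * (if h' : j ∈ ((A ∪ B)ᶜ : Finset S) then v ⟨j, h'⟩ else (0:ℝ)))]
    refine Finset.sum_congr rfl fun j _ => ?_
    rw [dif_pos j.property]
    rfl
  have hqsol : (∀ m : ZMod M, ∀ i ∈ ((A ∪ B)ᶜ : Finset S),
      q m i = ∑ j : S, P m i j * q (m + 1) j) ∧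
      (∀ m : ZMod M, ∀ i ∈ A, q m i = 0) ∧ (∀ m : ZMod M, ∀ i ∈ B, q m i = 1) := by
    refine ⟨?_, hqA, hqB⟩
    intro m i hi
    rw [hsplit m i (q (m + 1))]
    have hCpart : ∑ j ∈ ((A ∪ B)ᶜ : Finset S), P m i j * q (m + 1) j
        = (restrictC ((A ∪ B)ᶜ : Finset S) (P m) *ᵥ x (m + 1)) ⟨i, hi⟩ := by
      rw [← hsumC m i hi (x (m + 1))]
      refine Finset.sum_congr rfl fun j hj => ?_
      simp only [hq, hj, dif_pos]
    have hApart : ∑ j ∈ A, P m i j * q (m + 1) j = 0 := by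
      refine Finset.sum_eq_zero fun j hj => ?_
      rw [hqA (m + 1) j hj, mul_zero]
    have hBpart : ∑ j ∈ B, P m i j * q (m + 1) j = ∑ j ∈ B, P m i j := by
      refine Finset.sum_congr rfl fun j hj => ?_
      rw [hqB (m + 1) j hj, mul_one]
    rw [hCpart, hApart, hBpart, hqC m i hi, hxm m ⟨i, hi⟩]
    ring
  refine ⟨q, hqsol, ?_⟩
  -- uniqueness
  intro q' hq'
  obtain ⟨h1', h2', h3'⟩ := hq'
  have hdiff0 : ∀ (m : ZMod M) (j : S), j ∉ ((A ∪ B)ᶜ : Finset S) → q' m j - q m j = 0 := by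
    intro m j hj
    rcases hnotC j hj with hjA | hjB
    · rw [h2' m j hjA, hqA m j hjA, sub_zero]
    · rw [h3' m j hjB, hqB m j hjB, sub_self]
  have hdC : ∀ m : ZMod M, ∀ i ∈ ((A ∪ B)ᶜ : Finset S), q' m i = q m i := by
    have hy : ∀ m : ZMod M, (fun i : {s : S // s ∈ ((A ∪ B)ᶜ : Finset S)} =>
        q' m i.val - q m i.val) = restrictC ((A ∪ B)ᶜ : Finset S) (P m) *ᵥ
        (fun i : {s : S // s ∈ ((A ∪ B)ᶜ : Finset S)} => q' (m+1) i.val - q (m+1) i.val) := by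
      intro m
      funext i
      have e1 : q' m i.val - q m i.val
          = ∑ j : S, P m i.val j * (q' (m + 1) j - q (m + 1) j) := by
        rw [h1' m i.val i.property, hqsol.1 m i.val i.property]
        rw [← Finset.sum_sub_distrib]
        refine Finset.sum_congr rfl fun j _ => by ring
      rw [e1, hsplit m i.val (fun j => q' (m + 1) j - q (m + 1) j)]
      have hz1 : ∑ j ∈ A, P m i.val j * (q' (m + 1) j - q (m + 1) j) = 0 :=
        Finset.sum_eq_zero fun j hj => by
          rw [hdiff0 (m+1) j (hAnotC j hj), mul_zero]
      have hz2 : ∑ j ∈ B, P m i.val j * (q' (m + 1) j - q (m + 1) j) = 0 :=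
        Finset.sum_eq_zero fun j hj => by
          rw [hdiff0 (m+1) j (hBnotC j hj), mul_zero]
      rw [hz1, hz2]
      have := hsumC m i.val i.property
        (fun j : {s : S // s ∈ ((A ∪ B)ᶜ : Finset S)} => q' (m+1) j.val - q (m+1) j.val)
      rw [Matrix.mulVec, dotProduct] at this ⊢
      rw [← this]
      simp only [add_zero, add_zero]
      refine Finset.sum_congr rfl fun j hj => ?_
      rw [dif_pos hj]
    intro m i hi
    have hrec : ∀ n : ℕ, (fun n : ℕ => fun i : {s : S // s ∈ ((A ∪ B)ᶜ : Finset S)} =>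
        q' ((n : ℕ) : ZMod M) i.val - q ((n : ℕ) : ZMod M) i.val) n
        = restrictC ((A ∪ B)ᶜ : Finset S) (P ((n : ℕ) : ZMod M)) *ᵥ
          (fun n : ℕ => fun i : {s : S // s ∈ ((A ∪ B)ᶜ : Finset S)} =>
            q' ((n : ℕ) : ZMod M) i.val - q ((n : ℕ) : ZMod M) i.val) (n + 1) := by
      intro n
      have := hy ((n : ℕ) : ZMod M)
      simpa [Nat.cast_add, Nat.cast_one] using this
    have hper : (fun n : ℕ => fun i : {s : S // s ∈ ((A ∪ B)ᶜ : Finset S)} =>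
        q' ((n : ℕ) : ZMod M) i.val - q ((n : ℕ) : ZMod M) i.val) M
        = (fun n : ℕ => fun i : {s : S // s ∈ ((A ∪ B)ᶜ : Finset S)} =>
        q' ((n : ℕ) : ZMod M) i.val - q ((n : ℕ) : ZMod M) i.val) 0 := by
      simp [ZMod.natCast_self]
    have hv := chain_vanish P hnonneg hrow hirr A B hB hC _ hrec hper m.val
      (le_of_lt (ZMod.val_lt m))
    have hv' := congrFun hv ⟨i, hi⟩
    simp only [ZMod.natCast_val, ZMod.cast_id, Pi.zero_apply] at hv'
    linarith
  funext m i
  by_cases hi : i ∈ ((A ∪ B)ᶜ : Finset S)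
  · exact hdC m i hi
  · rcases hnotC i hi with hiA | hiB
    · rw [h2' m i hiA, hqA m i hiA]
    · rw [h3' m i hiB, hqB m i hiB]
end

section
/- For an M-stationary periodically driven Markov chain, the periodic reactive current f^{AB}_{m,ij} = q⁻_{m,i} π_{m,i} P_{m,ij} q⁺_{m+1,j} satisfies the node conservation law Σ_j f^{AB}_{m,ij} = Σ_j f^{AB}_{m−1,ji} for every i ∈ C and m ∈ {0,…,M−1}, and over one period the total reactive flux out of A equals the total reactive flux into B: Σ_m Σ_{i∈A, j∈S} f^{AB}_{m,ij} = Σ_m Σ_{i∈S, j∈B} f^{AB}_{m,ij}. -/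
/-- **Conservation laws for the periodic reactive current.**
For an `M`-stationary periodically driven Markov chain with transition matrices `P_m`,
equivariant invariant distributions `π_m` (`π_{m+1}^T = π_m^T P_m`), time-reversed
matrices `P⁻_{m,ij} = P_{m−1,ji} π_{m−1,j} / π_{m,i}`, and `M`-periodic forward and
backward committors `q⁺, q⁻`, the reactive current
`f^{AB}_{m,ij} = q⁻_{m,i} π_{m,i} P_{m,ij} q⁺_{m+1,j}` satisfies the node conservation
law `∑_j f^{AB}_{m,ij} = ∑_j f^{AB}_{m−1,ji}` for every `i ∈ C` and every `m`, and over
one period the total reactive flux out of `A` equals the total reactive flux into `B`. -/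
theorem stmt14
    {S : Type*} [Fintype S] [DecidableEq S] (M : ℕ) [NeZero M]
    (P : ZMod M → S → S → ℝ)
    (hnonneg : ∀ m i j, 0 ≤ P m i j)
    (hrow : ∀ m i, ∑ j : S, P m i j = 1)
    (π : ZMod M → S → ℝ)
    (hπpos : ∀ m i, 0 < π m i)
    (hπsum : ∀ m, ∑ i : S, π m i = 1)
    (hπequiv : ∀ (m : ZMod M) (j : S), π (m + 1) j = ∑ i : S, π m i * P m i j)
    (A B : Finset S) (hA : A.Nonempty) (hB : B.Nonempty) (hAB : Disjoint A B)
    (qp qm : ZMod M → S → ℝ)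
    (hqpC : ∀ m : ZMod M, ∀ i ∈ ((A ∪ B)ᶜ : Finset S),
      qp m i = ∑ j : S, P m i j * qp (m + 1) j)
    (hqpA : ∀ m : ZMod M, ∀ i ∈ A, qp m i = 0)
    (hqpB : ∀ m : ZMod M, ∀ i ∈ B, qp m i = 1)
    (hqmC : ∀ m : ZMod M, ∀ i ∈ ((A ∪ B)ᶜ : Finset S),
      qm m i = ∑ j : S, (P (m - 1) j i * π (m - 1) j / π m i) * qm (m - 1) j)
    (hqmA : ∀ m : ZMod M, ∀ i ∈ A, qm m i = 1)
    (hqmB : ∀ m : ZMod M, ∀ i ∈ B, qm m i = 0) :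
    -- node-wise conservation law
    (∀ m : ZMod M, ∀ i ∈ ((A ∪ B)ᶜ : Finset S),
      ∑ j : S, qm m i * π m i * P m i j * qp (m + 1) j =
        ∑ j : S, qm (m - 1) j * π (m - 1) j * P (m - 1) j i * qp m i) ∧
    -- total flux out of A over one period equals total flux into B
    (∑ m : ZMod M, ∑ i ∈ A, ∑ j : S, qm m i * π m i * P m i j * qp (m + 1) j =
      ∑ m : ZMod M, ∑ i : S, ∑ j ∈ B, qm m i * π m i * P m i j * qp (m + 1) j) := by
  classical
  have node : ∀ m : ZMod M, ∀ i ∈ ((A ∪ B)ᶜ : Finset S),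
      ∑ j : S, qm m i * π m i * P m i j * qp (m + 1) j =
        ∑ j : S, qm (m - 1) j * π (m - 1) j * P (m - 1) j i * qp m i := by
    intro m i hi
    have h1 : ∑ j : S, qm m i * π m i * P m i j * qp (m + 1) j
        = qm m i * π m i * qp m i := by
      rw [hqpC m i hi, Finset.mul_sum]
      exact Finset.sum_congr rfl fun j _ => by ring
    have h3 : qm m i * π m i = ∑ j : S, qm (m - 1) j * π (m - 1) j * P (m - 1) j i := by
      rw [hqmC m i hi, Finset.sum_mul]
      refine Finset.sum_congr rfl fun j _ => ?_
      field_simp [(hπpos m i).ne']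
    have h2 : ∑ j : S, qm (m - 1) j * π (m - 1) j * P (m - 1) j i * qp m i
        = qm m i * π m i * qp m i := by
      rw [← Finset.sum_mul, ← h3]
    rw [h1, h2]
  refine ⟨node, ?_⟩
  set g : ZMod M → S → S → ℝ := fun m i j => qm m i * π m i * P m i j * qp (m + 1) j
    with hg
  have hgB : ∀ m : ZMod M, ∀ i ∈ B, ∀ j : S, g m i j = 0 := by
    intro m i hi j; simp [hg, hqmB m i hi]
  have hgA : ∀ m : ZMod M, ∀ i : S, ∀ j ∈ A, g m i j = 0 := by
    intro m i j hj; simp [hg, hqpA (m + 1) j hj]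
  -- splitting the full sum over rows
  have splitRow : ∀ m : ZMod M,
      ∑ i ∈ A, ∑ j : S, g m i j
        = (∑ i : S, ∑ j : S, g m i j) - ∑ i ∈ ((A ∪ B)ᶜ : Finset S), ∑ j : S, g m i j := by
    intro m
    have h0 : ∑ i ∈ (A ∪ B : Finset S), ∑ j : S, g m i j
        + ∑ i ∈ ((A ∪ B)ᶜ : Finset S), ∑ j : S, g m i j = ∑ i : S, ∑ j : S, g m i j :=
      Finset.sum_add_sum_compl (A ∪ B) _
    have hB0 : ∑ i ∈ B, ∑ j : S, g m i j = 0 :=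
      Finset.sum_eq_zero fun i hi => Finset.sum_eq_zero fun j _ => hgB m i hi j
    rw [Finset.sum_union hAB, hB0, add_zero] at h0
    linarith
  -- splitting the full sum over columns
  have splitCol : ∀ m : ZMod M,
      ∑ i : S, ∑ j ∈ B, g m i j
        = (∑ i : S, ∑ j : S, g m i j) - ∑ j ∈ ((A ∪ B)ᶜ : Finset S), ∑ i : S, g m i j := by
    intro m
    rw [Finset.sum_comm]
    have h0 : ∑ j ∈ (A ∪ B : Finset S), ∑ i : S, g m i j
        + ∑ j ∈ ((A ∪ B)ᶜ : Finset S), ∑ i : S, g m i j = ∑ j : S, ∑ i : S, g m i j :=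
      Finset.sum_add_sum_compl (A ∪ B) _
    have hA0 : ∑ j ∈ A, ∑ i : S, g m i j = 0 :=
      Finset.sum_eq_zero fun j hj => Finset.sum_eq_zero fun i _ => hgA m i j hj
    rw [Finset.sum_union hAB, hA0, zero_add] at h0
    rw [Finset.sum_comm (s := Finset.univ) (t := Finset.univ)]
    linarith
  -- the interior contributions agree after summing over one period
  have interior : ∑ m : ZMod M, ∑ i ∈ ((A ∪ B)ᶜ : Finset S), ∑ j : S, g m i j
      = ∑ m : ZMod M, ∑ j ∈ ((A ∪ B)ᶜ : Finset S), ∑ i : S, g m i j := by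
    have step1 : ∀ m : ZMod M, ∑ i ∈ ((A ∪ B)ᶜ : Finset S), ∑ j : S, g m i j
        = ∑ i ∈ ((A ∪ B)ᶜ : Finset S), ∑ j : S, g (m - 1) j i := by
      intro m
      refine Finset.sum_congr rfl fun i hi => ?_
      have := node m i hi
      simp only [hg]
      rw [this]
      refine Finset.sum_congr rfl fun j _ => ?_
      rw [sub_add_cancel]
    calc ∑ m : ZMod M, ∑ i ∈ ((A ∪ B)ᶜ : Finset S), ∑ j : S, g m i j
        = ∑ m : ZMod M, ∑ i ∈ ((A ∪ B)ᶜ : Finset S), ∑ j : S, g (m - 1) j i := by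
          exact Finset.sum_congr rfl fun m _ => step1 m
      _ = ∑ m : ZMod M, ∑ i ∈ ((A ∪ B)ᶜ : Finset S), ∑ j : S, g m j i := by
          exact Fintype.sum_equiv (Equiv.subRight (1 : ZMod M)) _ _ (fun m => rfl)
      _ = ∑ m : ZMod M, ∑ j ∈ ((A ∪ B)ᶜ : Finset S), ∑ i : S, g m i j := rfl
  calc ∑ m : ZMod M, ∑ i ∈ A, ∑ j : S, g m i j
      = ∑ m : ZMod M, ((∑ i : S, ∑ j : S, g m i j)
          - ∑ i ∈ ((A ∪ B)ᶜ : Finset S), ∑ j : S, g m i j) :=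
        Finset.sum_congr rfl fun m _ => splitRow m
    _ = (∑ m : ZMod M, ∑ i : S, ∑ j : S, g m i j)
          - ∑ m : ZMod M, ∑ i ∈ ((A ∪ B)ᶜ : Finset S), ∑ j : S, g m i j := by
        rw [Finset.sum_sub_distrib]
    _ = (∑ m : ZMod M, ∑ i : S, ∑ j : S, g m i j)
          - ∑ m : ZMod M, ∑ j ∈ ((A ∪ B)ᶜ : Finset S), ∑ i : S, g m i j := by
        rw [interior]
    _ = ∑ m : ZMod M, ∑ i : S, ∑ j ∈ B, g m i j := by
        rw [← Finset.sum_sub_distrib]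
        exact Finset.sum_congr rfl fun m _ => (splitCol m).symm
end

section
/- For a finite-time Markov chain on {0,…,N−1} in stationarity with initial density λ(0) = π, the time-dependent reactive current f^{AB}_{ij}(n) = q⁻_i(n) λ_i(n) P_{ij}(n) q⁺_j(n+1) satisfies the node conservation law Σ_j f^{AB}_{ij}(n) = Σ_j f^{AB}_{ji}(n−1) for i ∈ C and n ∈ {1,…,N−2}, and the total outflow from A over the interval equals the total inflow into B: Σ_{n=0}^{N−2} Σ_{i∈A, j∈S} f^{AB}_{ij}(n) = Σ_{n=0}^{N−2} Σ_{i∈S, j∈B} f^{AB}_{ij}(n). -/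
/-- **Conservation laws for the finite-time reactive current.**
For a Markov chain on `{0, …, N−1}` in stationarity (densities `λ(n) = π` for all `n`,
with `λ(n+1)^T = λ(n)^T P(n)`), with backward transition matrices
`P⁻_{ij}(n) = (λ_j(n−1)/λ_i(n)) P_{ji}(n−1)`, finite-time forward committor `q⁺` and
backward committor `q⁻`, the time-dependent reactive current
`f^{AB}_{ij}(n) = q⁻_i(n) λ_i(n) P_{ij}(n) q⁺_j(n+1)` satisfies the node conservation
law `∑_j f^{AB}_{ij}(n) = ∑_j f^{AB}_{ji}(n−1)` for `i ∈ C` and `n ∈ {1,…,N−2}`, and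
the total outflow from `A` over the interval equals the total inflow into `B`. -/
theorem stmt17
    {S : Type*} [Fintype S] [DecidableEq S]
    (N : ℕ) (hN : 2 ≤ N)
    (P : ℕ → S → S → ℝ)
    (hnonneg : ∀ n i j, 0 ≤ P n i j)
    (hrow : ∀ n i, ∑ j : S, P n i j = 1)
    (lam : ℕ → S → ℝ) (π : S → ℝ)
    (hlampos : ∀ n, n ≤ N - 1 → ∀ i, 0 < lam n i)
    (hlamev : ∀ n, n ≤ N - 2 → ∀ j, lam (n + 1) j = ∑ i : S, lam n i * P n i j)
    -- stationarity with initial density π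
    (hinit : lam 0 = π)
    (hstat : ∀ n, n ≤ N - 1 → lam n = π)
    (A B : Finset S) (hA : A.Nonempty) (hB : B.Nonempty) (hAB : Disjoint A B)
    (qp qm : ℕ → S → ℝ)
    -- forward committor system
    (hqpC : ∀ n, n ≤ N - 2 → ∀ i ∈ ((A ∪ B)ᶜ : Finset S),
      qp n i = ∑ j : S, P n i j * qp (n + 1) j)
    (hqpA : ∀ n, n ≤ N - 1 → ∀ i ∈ A, qp n i = 0)
    (hqpB : ∀ n, n ≤ N - 1 → ∀ i ∈ B, qp n i = 1)
    (hqpfin : ∀ i ∈ ((A ∪ B)ᶜ : Finset S), qp (N - 1) i = 0)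
    -- backward committor system
    (hqmC : ∀ n, 1 ≤ n → n ≤ N - 1 → ∀ i ∈ ((A ∪ B)ᶜ : Finset S),
      qm n i = ∑ j : S, (lam (n - 1) j / lam n i * P (n - 1) j i) * qm (n - 1) j)
    (hqmA : ∀ n, n ≤ N - 1 → ∀ i ∈ A, qm n i = 1)
    (hqmB : ∀ n, n ≤ N - 1 → ∀ i ∈ B, qm n i = 0)
    (hqminit : ∀ i ∈ ((A ∪ B)ᶜ : Finset S), qm 0 i = 0) :
    -- node-wise conservation law
    (∀ n, 1 ≤ n → n ≤ N - 2 → ∀ i ∈ ((A ∪ B)ᶜ : Finset S),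
      ∑ j : S, qm n i * lam n i * P n i j * qp (n + 1) j =
        ∑ j : S, qm (n - 1) j * lam (n - 1) j * P (n - 1) j i * qp n i) ∧
    -- total outflow from A equals total inflow into B
    (∑ n ∈ Finset.range (N - 1), ∑ i ∈ A, ∑ j : S,
        qm n i * lam n i * P n i j * qp (n + 1) j =
      ∑ n ∈ Finset.range (N - 1), ∑ i : S, ∑ j ∈ B,
        qm n i * lam n i * P n i j * qp (n + 1) j) := by
  have hN2 : 1 ≤ N - 1 := by omega
  obtain ⟨m, hm⟩ : ∃ m, N - 1 = m + 1 := ⟨N - 2, by omega⟩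
  have hm2 : m = N - 2 := by omega
  -- forward lemma
  have L1 : ∀ n, n ≤ N - 2 → ∀ i ∈ ((A ∪ B)ᶜ : Finset S),
      (∑ j : S, qm n i * lam n i * P n i j * qp (n + 1) j)
        = qm n i * lam n i * qp n i := by
    intro n hn i hi
    rw [hqpC n hn i hi, Finset.mul_sum]
    exact Finset.sum_congr rfl fun j _ => by ring
  -- backward lemma
  have L2 : ∀ n, 1 ≤ n → n ≤ N - 1 → ∀ i ∈ ((A ∪ B)ᶜ : Finset S),
      (∑ j : S, qm (n - 1) j * lam (n - 1) j * P (n - 1) j i)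
        = qm n i * lam n i := by
    intro n h1 h2 i hi
    have hne : lam n i ≠ 0 := (hlampos n h2 i).ne'
    rw [hqmC n h1 h2 i hi, Finset.sum_mul]
    refine Finset.sum_congr rfl fun j _ => ?_
    field_simp
  have node : ∀ n, 1 ≤ n → n ≤ N - 2 → ∀ i ∈ ((A ∪ B)ᶜ : Finset S),
      ∑ j : S, qm n i * lam n i * P n i j * qp (n + 1) j =
        ∑ j : S, qm (n - 1) j * lam (n - 1) j * P (n - 1) j i * qp n i := by
    intro n h1 h2 i hi
    rw [L1 n h2 i hi]
    calc qm n i * lam n i * qp n i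
        = (∑ j : S, qm (n - 1) j * lam (n - 1) j * P (n - 1) j i) * qp n i := by
          rw [L2 n h1 (by omega) i hi]
      _ = _ := Finset.sum_mul _ _ _
  refine ⟨node, ?_⟩
  have hzeroB : ∀ n, n ≤ N - 1 → ∀ i ∈ B,
      (∑ j : S, qm n i * lam n i * P n i j * qp (n + 1) j) = 0 := by
    intro n hn i hi
    exact Finset.sum_eq_zero fun j _ => by rw [hqmB n hn i hi]; ring
  have hzeroA : ∀ n, n + 1 ≤ N - 1 → ∀ j ∈ A,
      (∑ i : S, qm n i * lam n i * P n i j * qp (n + 1) j) = 0 := by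
    intro n hn j hj
    exact Finset.sum_eq_zero fun i _ => by rw [hqpA (n + 1) hn j hj]; ring
  have split1 : ∀ n, n ≤ N - 1 →
      (∑ i : S, ∑ j : S, qm n i * lam n i * P n i j * qp (n + 1) j)
        = (∑ i ∈ A, ∑ j : S, qm n i * lam n i * P n i j * qp (n + 1) j)
          + ∑ i ∈ ((A ∪ B)ᶜ : Finset S), ∑ j : S,
              qm n i * lam n i * P n i j * qp (n + 1) j := by
    intro n hn
    rw [← Finset.sum_add_sum_compl (A ∪ B), Finset.sum_union hAB,
      Finset.sum_eq_zero fun i hi => hzeroB n hn i hi]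
    ring
  have split2 : ∀ n, n + 1 ≤ N - 1 →
      (∑ i : S, ∑ j : S, qm n i * lam n i * P n i j * qp (n + 1) j)
        = (∑ j ∈ B, ∑ i : S, qm n i * lam n i * P n i j * qp (n + 1) j)
          + ∑ j ∈ ((A ∪ B)ᶜ : Finset S), ∑ i : S,
              qm n i * lam n i * P n i j * qp (n + 1) j := by
    intro n hn
    rw [Finset.sum_comm, ← Finset.sum_add_sum_compl (A ∪ B), Finset.sum_union hAB,
      Finset.sum_eq_zero fun j hj => hzeroA n hn j hj]
    ring
  have hT : ∀ n ∈ Finset.range (N - 1),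
      (∑ i ∈ A, ∑ j : S, qm n i * lam n i * P n i j * qp (n + 1) j)
        + (∑ i ∈ ((A ∪ B)ᶜ : Finset S), ∑ j : S,
            qm n i * lam n i * P n i j * qp (n + 1) j)
      = (∑ j ∈ B, ∑ i : S, qm n i * lam n i * P n i j * qp (n + 1) j)
        + ∑ j ∈ ((A ∪ B)ᶜ : Finset S), ∑ i : S,
            qm n i * lam n i * P n i j * qp (n + 1) j := by
    intro n hn
    rw [Finset.mem_range] at hn
    rw [← split1 n (by omega), ← split2 n (by omega)]
  have hsum := Finset.sum_congr rfl hT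
  rw [Finset.sum_add_distrib, Finset.sum_add_distrib] at hsum
  have hC : (∑ n ∈ Finset.range (N - 1), ∑ i ∈ ((A ∪ B)ᶜ : Finset S), ∑ j : S,
        qm n i * lam n i * P n i j * qp (n + 1) j)
      = ∑ n ∈ Finset.range (N - 1), ∑ j ∈ ((A ∪ B)ᶜ : Finset S), ∑ i : S,
        qm n i * lam n i * P n i j * qp (n + 1) j := by
    rw [hm, Finset.sum_range_succ', Finset.sum_range_succ]
    have h0 : (∑ i ∈ ((A ∪ B)ᶜ : Finset S), ∑ j : S,
        qm 0 i * lam 0 i * P 0 i j * qp (0 + 1) j) = 0 :=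
      Finset.sum_eq_zero fun i hi => Finset.sum_eq_zero fun j _ => by
        rw [hqminit i hi]; ring
    have hend : (∑ j ∈ ((A ∪ B)ᶜ : Finset S), ∑ i : S,
        qm m i * lam m i * P m i j * qp (m + 1) j) = 0 := by
      refine Finset.sum_eq_zero fun j hj => Finset.sum_eq_zero fun i _ => ?_
      have hq : qp (m + 1) j = 0 := by rw [← hm]; exact hqpfin j hj
      rw [hq]; ring
    rw [h0, hend, add_zero, add_zero]
    refine Finset.sum_congr rfl fun k hk => ?_
    rw [Finset.mem_range] at hk
    have hnode := node (k + 1) (by omega) (by omega) 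
    simp only [Nat.add_sub_cancel] at hnode
    exact Finset.sum_congr rfl fun i hi => hnode i hi
  have hfin : (∑ n ∈ Finset.range (N - 1), ∑ i : S, ∑ j ∈ B,
        qm n i * lam n i * P n i j * qp (n + 1) j)
      = ∑ n ∈ Finset.range (N - 1), ∑ j ∈ B, ∑ i : S,
        qm n i * lam n i * P n i j * qp (n + 1) j :=
    Finset.sum_congr rfl fun n _ => Finset.sum_comm
  rw [hfin]
  linarith
end

section
/- Let P be an irreducible transition matrix on a finite state space with invariant distribution π, and consider the stationary chain on the finite time interval {−N,…,N}. Then the finite-time forward committor q⁺_i(n) converges, as N → ∞ with n fixed, to the infinite-time stationary forward committor q⁺_i, and similarly q⁻_i(n) → q⁻_i; consequently the finite-time reactive distribution, reactive current, and rates converge to their stationary infinite-time counterparts: μ^{AB}_i(n) → q⁻_i π_i q⁺_i and f^{AB}_{ij}(n) → q⁻_i π_i P_{ij} q⁺_j. -/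
/-!
Off `C = (A ∪ B)ᶜ` the finite-time committor agrees with the infinite-time one, so on `C` their
difference obeys the recursion of the chain killed on leaving `C`: at time `N - k` it equals
`Qᵏ e`, where `Q` is the killed transition matrix and `e` (the terminal condition minus `q` on `C`)
does not depend on `N`. Irreducibility lets every state leave `C` with positive probability, so
some power of `Q` has `ℓ∞`-operator norm `< 1` and `Qᵏ → 0`. Backward committors are forward
committors of the time-reversed chain run backwards in time, and the remaining limits are sums and
products of these two.
-/

open Filter Topology Matrix

theorem tendsto_pow_atTop_nhds_zero_of_norm_pow_lt_one {R : Type*} [SeminormedRing R] {x : R}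
    (hx : ‖x‖ ≤ 1) {M : ℕ} (hM : 0 < M) (hxM : ‖x ^ M‖ < 1) :
    Tendsto (x ^ ·) atTop (𝓝 0) := by
  have hanti : Antitone (‖x ^ ·‖) := antitone_nat_of_succ_le fun k =>
    calc ‖x ^ (k + 1)‖ ≤ ‖x ^ k‖ * ‖x‖ := by rw [pow_succ]; exact norm_mul_le _ _
      _ ≤ ‖x ^ k‖ := mul_le_of_le_one_right (norm_nonneg _) hx
  have hlim := tendsto_atTop_ciInf hanti ⟨0, by rintro _ ⟨k, rfl⟩; exact norm_nonneg _⟩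
  have hsub : Tendsto (fun j => ‖x ^ (M * j)‖) atTop (𝓝 0) := by
    simpa only [pow_mul, norm_zero] using (tendsto_pow_atTop_nhds_zero_of_norm_lt_one hxM).norm
  have h0 := tendsto_nhds_unique (hlim.comp (tendsto_id.const_mul_atTop' hM)) hsub
  rw [h0] at hlim
  exact tendsto_zero_iff_norm_tendsto_zero.2 hlim

section LinftyOpNorm

attribute [local instance] Matrix.linftyOpNormedAddCommGroup Matrix.linftyOpNormedRing

variable {l m n α : Type*} [Fintype m] [Fintype n]

theorem sum_norm_mul_apply_le [NormedRing α] (X : Matrix l m α) (Y : Matrix m n α) (i : l) :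
    ∑ k, ‖(X * Y) i k‖ ≤ (∑ j, ‖X i j‖) * ‖Y‖ := by
  have hrow : replicateRow (Fin 1) ((X * Y) i) = replicateRow (Fin 1) (X i) * Y := by ext; rfl
  rw [← linfty_opNorm_replicateRow (ι := Fin 1), ← linfty_opNorm_replicateRow (ι := Fin 1), hrow]
  exact linfty_opNorm_mul _ _

theorem linfty_opNorm_le_of_sum_norm_le [NormedAddCommGroup α] {X : Matrix m n α} {r : ℝ}
    (hr : 0 ≤ r) (hX : ∀ i, ∑ j, ‖X i j‖ ≤ r) : ‖X‖ ≤ r := by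
  lift r to NNReal using hr
  rw [linfty_opNorm_def, NNReal.coe_le_coe, Finset.sup_le_iff]
  intro i _
  rw [← NNReal.coe_le_coe, NNReal.coe_sum]
  exact hX i

theorem linfty_opNorm_lt_of_sum_norm_lt [NormedAddCommGroup α] {X : Matrix m n α} {r : ℝ}
    (hr : 0 < r) (hX : ∀ i, ∑ j, ‖X i j‖ < r) : ‖X‖ < r := by
  lift r to NNReal using hr.le
  rw [linfty_opNorm_def, NNReal.coe_lt_coe, Finset.sup_lt_iff (by exact_mod_cast hr)]
  intro i _
  rw [← NNReal.coe_lt_coe, NNReal.coe_sum]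
  exact hX i

end LinftyOpNorm

-- Rows and columns outside `C` are zeroed rather than removed, so that powers stay in
-- `Matrix S S ℝ`.
def killedMatrix {S : Type*} [DecidableEq S] (R : Matrix S S ℝ) (C : Finset S) : Matrix S S ℝ :=
  Matrix.of fun a b => if a ∈ C ∧ b ∈ C then R a b else 0

theorem killedMatrix_apply {S : Type*} [DecidableEq S] (R : Matrix S S ℝ) (C : Finset S)
    (a b : S) : killedMatrix R C a b = if a ∈ C ∧ b ∈ C then R a b else 0 :=
  rfl

section killedMatrix

variable {S : Type*} [Fintype S] [DecidableEq S] {R : Matrix S S ℝ} {C : Finset S}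

theorem killedMatrix_apply_nonneg (hR : R ∈ rowStochastic ℝ S) (a b : S) :
    0 ≤ killedMatrix R C a b := by
  rw [killedMatrix_apply]; split_ifs
  exacts [nonneg_of_mem_rowStochastic hR, le_rfl]

theorem killedMatrix_apply_le (hR : R ∈ rowStochastic ℝ S) (a b : S) :
    killedMatrix R C a b ≤ R a b := by
  rw [killedMatrix_apply]; split_ifs
  exacts [le_rfl, nonneg_of_mem_rowStochastic hR]

theorem pow_killedMatrix_apply_le (hR : R ∈ rowStochastic ℝ S) (k : ℕ) (a b : S) :
    (killedMatrix R C ^ k) a b ≤ (R ^ k) a b := by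
  induction k generalizing b with
  | zero => rfl
  | succ k ih =>
    rw [pow_succ, pow_succ, mul_apply, mul_apply]
    exact Finset.sum_le_sum fun c _ => mul_le_mul (ih c) (killedMatrix_apply_le hR c b)
      (killedMatrix_apply_nonneg hR c b)
      (pow_apply_nonneg (fun _ _ => nonneg_of_mem_rowStochastic hR) k a c)

theorem pow_killedMatrix_apply_eq_zero {k : ℕ} (hk : 0 < k) (a : S) {b : S} (hb : b ∉ C) :
    (killedMatrix R C ^ k) a b = 0 := by
  obtain ⟨k, rfl⟩ := Nat.exists_eq_add_one_of_ne_zero hk.ne'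
  rw [pow_succ, mul_apply]
  exact Finset.sum_eq_zero fun c _ => by simp [killedMatrix_apply, hb]

theorem sum_pow_killedMatrix_apply_le_one (hR : R ∈ rowStochastic ℝ S) (k : ℕ) (a : S) :
    ∑ c, (killedMatrix R C ^ k) a c ≤ 1 :=
  (Finset.sum_le_sum fun c _ => pow_killedMatrix_apply_le hR k a c).trans_eq
    (sum_row_of_mem_rowStochastic (pow_mem hR k) a)

theorem sum_pow_killedMatrix_apply_lt_one (hR : R ∈ rowStochastic ℝ S) {k : ℕ} (hk : 0 < k)
    {a b : S} (hb : b ∉ C) (hab : 0 < (R ^ k) a b) : ∑ c, (killedMatrix R C ^ k) a c < 1 := by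
  have hsum := sum_row_of_mem_rowStochastic (pow_mem hR k) a
  rw [← Finset.add_sum_erase _ _ (Finset.mem_univ b)] at hsum
  rw [← Finset.add_sum_erase _ _ (Finset.mem_univ b), pow_killedMatrix_apply_eq_zero hk a hb,
    zero_add]
  linarith [Finset.sum_le_sum fun c (_ : c ∈ Finset.univ.erase b) =>
    pow_killedMatrix_apply_le (C := C) hR k a c]

section LinftyOpNorm

attribute [local instance] Matrix.linftyOpNormedAddCommGroup Matrix.linftyOpNormedRing

theorem norm_pow_killedMatrix_le_one (hR : R ∈ rowStochastic ℝ S) (k : ℕ) :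
    ‖killedMatrix R C ^ k‖ ≤ 1 :=
  linfty_opNorm_le_of_sum_norm_le zero_le_one fun a => by
    simpa only [Real.norm_of_nonneg (pow_apply_nonneg (killedMatrix_apply_nonneg hR) k a _)]
      using sum_pow_killedMatrix_apply_le_one (C := C) hR k a

theorem exists_norm_pow_killedMatrix_lt_one (hR : R ∈ rowStochastic ℝ S)
    (hexit : ∀ a, ∃ k, 0 < k ∧ ∃ b ∉ C, 0 < (R ^ k) a b) :
    ∃ M, 0 < M ∧ ‖killedMatrix R C ^ M‖ < 1 := by
  choose k hk b hbC hb using hexit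
  set Q := killedMatrix R C
  have hQ : ∀ j a c, 0 ≤ (Q ^ j) a c := pow_apply_nonneg (killedMatrix_apply_nonneg hR)
  set M := Finset.univ.sup k + 1
  refine ⟨M, Nat.succ_pos _, linfty_opNorm_lt_of_sum_norm_lt one_pos fun a => ?_⟩
  have hka : k a ≤ M := (Finset.le_sup (Finset.mem_univ a)).trans (Nat.le_succ _)
  -- Row `a` of `Qᴹ = Q^(k a) * Q^(M - k a)` is bounded by row `a` of `Q^(k a)`, as `‖Q ^ j‖ ≤ 1`.
  rw [← Nat.add_sub_cancel' hka, pow_add]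
  calc ∑ c, ‖(Q ^ k a * Q ^ (M - k a)) a c‖
      ≤ (∑ c, ‖(Q ^ k a) a c‖) * ‖Q ^ (M - k a)‖ := sum_norm_mul_apply_le _ _ a
    _ ≤ ∑ c, (Q ^ k a) a c := by
        simp only [fun c => Real.norm_of_nonneg (hQ (k a) a c)]
        exact mul_le_of_le_one_right (Finset.sum_nonneg fun c _ => hQ _ a c)
          (norm_pow_killedMatrix_le_one hR _)
    _ < 1 := sum_pow_killedMatrix_apply_lt_one hR (hk a) (hbC a) (hb a)

theorem tendsto_pow_killedMatrix (hR : R ∈ rowStochastic ℝ S)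
    (hexit : ∀ a, ∃ k, 0 < k ∧ ∃ b ∉ C, 0 < (R ^ k) a b) :
    Tendsto (killedMatrix R C ^ ·) atTop (𝓝 0) := by
  obtain ⟨M, hM, hQM⟩ := exists_norm_pow_killedMatrix_lt_one hR hexit
  exact tendsto_pow_atTop_nhds_zero_of_norm_pow_lt_one
    (by simpa using norm_pow_killedMatrix_le_one hR 1) hM hQM

end LinftyOpNorm

end killedMatrix

section FiniteHorizon

variable {S : Type*} [Fintype S] [DecidableEq S] {R : Matrix S S ℝ} {C : Finset S}

theorem eq_killedMatrix_mulVec {u v : S → ℝ} (hu : ∀ i ∈ C, u i = (R *ᵥ v) i)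
    (hu' : ∀ i ∉ C, u i = 0) (hv : ∀ i ∉ C, v i = 0) : u = killedMatrix R C *ᵥ v := by
  ext i
  by_cases hi : i ∈ C
  · rw [hu i hi]
    refine Finset.sum_congr rfl fun j _ => ?_
    by_cases hj : j ∈ C <;> simp [killedMatrix_apply, hi, hj, hv]
  · simp [hu' i hi, mulVec, dotProduct, killedMatrix_apply, hi]

theorem tendsto_finiteHorizon_of_terminal (hR : R ∈ rowStochastic ℝ S)
    (hexit : ∀ a, ∃ k, 0 < k ∧ ∃ b ∉ C, 0 < (R ^ k) a b)
    {q φ : S → ℝ} (hq : ∀ i ∈ C, q i = (R *ᵥ q) i) {f : ℕ → ℤ → S → ℝ}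
    (hfC : ∀ (N : ℕ) (n : ℤ), -(N : ℤ) ≤ n → n < N → ∀ i ∈ C, f N n i = (R *ᵥ f N (n + 1)) i)
    (hfq : ∀ (N : ℕ) (n : ℤ), -(N : ℤ) ≤ n → n ≤ N → ∀ i ∉ C, f N n i = q i)
    (hfN : ∀ N : ℕ, ∀ i ∈ C, f N N i = φ i) (n : ℤ) :
    Tendsto (fun N : ℕ => f N n) atTop (𝓝 q) := by
  set e : S → ℝ := fun i => if i ∈ C then φ i - q i else 0
  have herr : ∀ N k : ℕ, k ≤ 2 * N → f N (N - k) - q = killedMatrix R C ^ k *ᵥ e := by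
    intro N k
    induction k with
    | zero =>
      intro _
      ext i
      by_cases hi : i ∈ C
      · simp [e, hi, hfN N i hi]
      · simp [e, hi, hfq N N (by omega) le_rfl i hi]
    | succ k ih =>
      intro hk
      rw [pow_succ', ← mulVec_mulVec, ← ih (by omega)]
      apply eq_killedMatrix_mulVec
      · intro i hi
        have hn : ((N : ℤ) - (k + 1 : ℕ)) + 1 = N - k := by push_cast; ring
        rw [Pi.sub_apply, hfC N _ (by omega) (by omega) i hi, hn, hq i hi, mulVec_sub]
        rfl
      · exact fun i hi => sub_eq_zero.2 (hfq N (N - (k + 1 : ℕ)) (by omega) (by omega) i hi)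
      · exact fun i hi => sub_eq_zero.2 (hfq N (N - k) (by omega) (by omega) i hi)
  have hev : ∀ᶠ N : ℕ in atTop, q + killedMatrix R C ^ ((N : ℤ) - n).toNat *ᵥ e = f N n := by
    filter_upwards [eventually_ge_atTop (n.natAbs)] with N hN
    rw [← herr N _ (by omega), Int.toNat_of_nonneg (by omega), sub_sub_cancel, add_sub_cancel]
  have hk : Tendsto (fun N : ℕ => ((N : ℤ) - n).toNat) atTop atTop :=
    tendsto_atTop_atTop.mpr fun b => ⟨b + n.toNat, fun N hN => by omega⟩
  have hlim : Tendsto (fun N : ℕ => q + killedMatrix R C ^ ((N : ℤ) - n).toNat *ᵥ e) atTop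
      (𝓝 q) := by
    have hmulVec : Continuous fun M : Matrix S S ℝ => M *ᵥ e :=
      continuous_id.matrix_mulVec continuous_const
    simpa using tendsto_const_nhds.add
      ((hmulVec.tendsto 0).comp ((tendsto_pow_killedMatrix hR hexit).comp hk))
  exact hlim.congr' hev

theorem tendsto_finiteHorizon_of_initial (hR : R ∈ rowStochastic ℝ S)
    (hexit : ∀ a, ∃ k, 0 < k ∧ ∃ b ∉ C, 0 < (R ^ k) a b)
    {q φ : S → ℝ} (hq : ∀ i ∈ C, q i = (R *ᵥ q) i) {f : ℕ → ℤ → S → ℝ}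
    (hfC : ∀ (N : ℕ) (n : ℤ), -(N : ℤ) < n → n ≤ N → ∀ i ∈ C, f N n i = (R *ᵥ f N (n - 1)) i)
    (hfq : ∀ (N : ℕ) (n : ℤ), -(N : ℤ) ≤ n → n ≤ N → ∀ i ∉ C, f N n i = q i)
    (hf₀ : ∀ N : ℕ, ∀ i ∈ C, f N (-N) i = φ i) (n : ℤ) :
    Tendsto (fun N : ℕ => f N n) atTop (𝓝 q) := by
  have h := tendsto_finiteHorizon_of_terminal (f := fun N n => f N (-n)) hR hexit hq
    (fun N n h₁ h₂ i hi => by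
      rw [neg_add, ← sub_eq_add_neg]; exact hfC N (-n) (by omega) (by omega) i hi)
    (fun N n h₁ h₂ => hfq N (-n) (by omega) (by omega)) hf₀ (-n)
  simpa using h

end FiniteHorizon

noncomputable def timeReversal {S : Type*} (P : Matrix S S ℝ) (π : S → ℝ) : Matrix S S ℝ :=
  Matrix.of fun i j => π j / π i * P j i

section timeReversal

variable {S : Type*} [Fintype S] [DecidableEq S] {P : Matrix S S ℝ} {π : S → ℝ}

theorem timeReversal_mem_rowStochastic (hP : P ∈ rowStochastic ℝ S) (hπ : ∀ i, 0 < π i)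
    (hinv : π ᵥ* P = π) : timeReversal P π ∈ rowStochastic ℝ S := by
  refine mem_rowStochastic_iff_sum.2 ⟨fun i j => ?_, fun i => ?_⟩
  · exact mul_nonneg (div_nonneg (hπ j).le (hπ i).le) (nonneg_of_mem_rowStochastic hP)
  · simp_rw [timeReversal, of_apply, div_mul_eq_mul_div, ← Finset.sum_div]
    rw [show ∑ j, π j * P j i = π i from congrFun hinv i, div_self (hπ i).ne']

theorem pow_timeReversal_apply (hπ : ∀ i, π i ≠ 0) (k : ℕ) (i j : S) :
    (timeReversal P π ^ k) i j = π j / π i * (P ^ k) j i := by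
  induction k generalizing j with
  | zero =>
    by_cases h : i = j
    · subst h; simp [hπ i]
    · simp [one_apply, h, Ne.symm h]
  | succ k ih =>
    rw [pow_succ, pow_succ', mul_apply, mul_apply, Finset.mul_sum]
    refine Finset.sum_congr rfl fun c _ => ?_
    rw [ih, timeReversal, of_apply]
    field_simp [hπ c]

end timeReversal

theorem stmt18_general
    {S : Type*} [Fintype S] [DecidableEq S]
    (P : Matrix S S ℝ) (π : S → ℝ)
    (hnonneg : ∀ i j, 0 ≤ P i j)
    (hrow : ∀ i, ∑ j : S, P i j = 1)
    (hirr : ∀ i j : S, ∃ m : ℕ, 0 < m ∧ 0 < (P ^ m) i j)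
    (hπpos : ∀ i, 0 < π i)
    (hinv : ∀ j, ∑ i : S, π i * P i j = π j)
    (A B : Finset S) (hA : A.Nonempty) (hB : B.Nonempty)
    -- infinite-time committors
    (qp qm : S → ℝ)
    (hqpC : ∀ i ∈ ((A ∪ B)ᶜ : Finset S), qp i = ∑ j : S, P i j * qp j)
    (hqpA : ∀ i ∈ A, qp i = 0) (hqpB : ∀ i ∈ B, qp i = 1)
    (hqmC : ∀ i ∈ ((A ∪ B)ᶜ : Finset S),
      qm i = ∑ j : S, (π j / π i * P j i) * qm j)
    (hqmA : ∀ i ∈ A, qm i = 1) (hqmB : ∀ i ∈ B, qm i = 0)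
    -- finite-time forward committors on {−N, …, N}
    (qf : ℕ → ℤ → S → ℝ)
    (hqfC : ∀ (N : ℕ) (n : ℤ), -(N : ℤ) ≤ n → n < N →
      ∀ i ∈ ((A ∪ B)ᶜ : Finset S), qf N n i = ∑ j : S, P i j * qf N (n + 1) j)
    (hqfA : ∀ (N : ℕ) (n : ℤ), -(N : ℤ) ≤ n → n ≤ N → ∀ i ∈ A, qf N n i = 0)
    (hqfB : ∀ (N : ℕ) (n : ℤ), -(N : ℤ) ≤ n → n ≤ N → ∀ i ∈ B, qf N n i = 1)
    (hqffin : ∀ N : ℕ, ∀ i ∈ ((A ∪ B)ᶜ : Finset S), qf N (N : ℤ) i = 0)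
    -- finite-time backward committors on {−N, …, N}
    (qb : ℕ → ℤ → S → ℝ)
    (hqbC : ∀ (N : ℕ) (n : ℤ), -(N : ℤ) < n → n ≤ N →
      ∀ i ∈ ((A ∪ B)ᶜ : Finset S),
        qb N n i = ∑ j : S, (π j / π i * P j i) * qb N (n - 1) j)
    (hqbA : ∀ (N : ℕ) (n : ℤ), -(N : ℤ) ≤ n → n ≤ N → ∀ i ∈ A, qb N n i = 1)
    (hqbB : ∀ (N : ℕ) (n : ℤ), -(N : ℤ) ≤ n → n ≤ N → ∀ i ∈ B, qb N n i = 0)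
    (hqbinit : ∀ N : ℕ, ∀ i ∈ ((A ∪ B)ᶜ : Finset S), qb N (-(N : ℤ)) i = 0) :
    -- convergence of the committors
    (∀ (n : ℤ) (i : S), Tendsto (fun N : ℕ => qf N n i) atTop (nhds (qp i))) ∧
    (∀ (n : ℤ) (i : S), Tendsto (fun N : ℕ => qb N n i) atTop (nhds (qm i))) ∧
    -- convergence of the reactive distribution
    (∀ (n : ℤ) (i : S),
      Tendsto (fun N : ℕ => qb N n i * π i * qf N n i) atTop
        (nhds (qm i * π i * qp i))) ∧
    -- convergence of the reactive current
    (∀ (n : ℤ) (i j : S),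
      Tendsto (fun N : ℕ => qb N n i * π i * P i j * qf N (n + 1) j) atTop
        (nhds (qm i * π i * P i j * qp j))) ∧
    -- convergence of the discrete rates
    (∀ n : ℤ,
      Tendsto (fun N : ℕ => ∑ i ∈ A, ∑ j : S, qb N n i * π i * P i j * qf N (n + 1) j)
        atTop (nhds (∑ i ∈ A, ∑ j : S, qm i * π i * P i j * qp j))) ∧
    (∀ n : ℤ,
      Tendsto (fun N : ℕ =>
          ∑ i : S, ∑ j ∈ B, qb N (n - 1) i * π i * P i j * qf N n j)
        atTop (nhds (∑ i : S, ∑ j ∈ B, qm i * π i * P i j * qp j))) := by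
  have hP : P ∈ rowStochastic ℝ S := mem_rowStochastic_iff_sum.2 ⟨hnonneg, hrow⟩
  have hout : ∀ {i}, i ∉ ((A ∪ B)ᶜ : Finset S) → i ∈ A ∨ i ∈ B := by simp [or_iff_not_imp_left]
  have hf : ∀ (n : ℤ) (i : S), Tendsto (fun N : ℕ => qf N n i) atTop (𝓝 (qp i)) := by
    refine fun n => tendsto_pi_nhds.1 (tendsto_finiteHorizon_of_terminal hP (fun a => ?_) hqpC hqfC
      (fun N n h₁ h₂ i hi => ?_) hqffin n)
    · obtain ⟨b, hb⟩ := hB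
      obtain ⟨k, hk, hab⟩ := hirr a b
      exact ⟨k, hk, b, by simp [hb], hab⟩
    · rcases hout hi with hi | hi
      · rw [hqfA N n h₁ h₂ i hi, hqpA i hi]
      · rw [hqfB N n h₁ h₂ i hi, hqpB i hi]
  have hb : ∀ (n : ℤ) (i : S), Tendsto (fun N : ℕ => qb N n i) atTop (𝓝 (qm i)) := by
    refine fun n => tendsto_pi_nhds.1 (tendsto_finiteHorizon_of_initial
      (timeReversal_mem_rowStochastic hP hπpos (funext hinv)) (fun a => ?_) hqmC hqbC
      (fun N n h₁ h₂ i hi => ?_) hqbinit n)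
    · obtain ⟨b, hb⟩ := hA
      obtain ⟨k, hk, hba⟩ := hirr b a
      refine ⟨k, hk, b, by simp [hb], ?_⟩
      rw [pow_timeReversal_apply (fun i => (hπpos i).ne')]
      exact mul_pos (div_pos (hπpos b) (hπpos a)) hba
    · rcases hout hi with hi | hi
      · rw [hqbA N n h₁ h₂ i hi, hqmA i hi]
      · rw [hqbB N n h₁ h₂ i hi, hqmB i hi]
  have hcurrent : ∀ (n m : ℤ) (i j : S), Tendsto (fun N : ℕ => qb N n i * π i * P i j * qf N m j)
      atTop (𝓝 (qm i * π i * P i j * qp j)) := fun n m i j =>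
    (((hb n i).mul_const _).mul_const _).mul (hf m j)
  exact ⟨hf, hb, fun n i => ((hb n i).mul_const _).mul (hf n i),
    fun n i j => hcurrent n (n + 1) i j,
    fun n => tendsto_finsetSum _ fun i _ => tendsto_finsetSum _ fun j _ => hcurrent n (n + 1) i j,
    fun n => tendsto_finsetSum _ fun i _ => tendsto_finsetSum _ fun j _ => hcurrent (n - 1) n i j⟩

/-- **Convergence of finite-time TPT to stationary infinite-time TPT.**
Let `P` be an irreducible row-stochastic matrix with positive invariant distribution
`π`, and consider, for each horizon `N`, the stationary chain on `{−N, …, N}`.  Let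
`qf N` and `qb N` be the finite-time forward and backward committors (characterized by
their iterative systems with final condition at time `N`, resp. initial condition at
time `−N`) and let `qp`, `qm` be the infinite-time committors (solving the stationary
committor systems).  Then, for every fixed time `n` and states `i, j`, as `N → ∞`:
`qf N n i → qp i`, `qb N n i → qm i`, the reactive distribution
`μ^{AB}_i(n) = qb N n i ⬝ π i ⬝ qf N n i → qm i ⬝ π i ⬝ qp i`, the reactive current
`f^{AB}_{ij}(n) → qm i ⬝ π i ⬝ P i j ⬝ qp j`, and the discrete rates out of `A` and
into `B` converge to their stationary counterparts. -/
theorem stmt18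
    {S : Type*} [Fintype S] [DecidableEq S]
    (P : Matrix S S ℝ) (π : S → ℝ)
    (hnonneg : ∀ i j, 0 ≤ P i j)
    (hrow : ∀ i, ∑ j : S, P i j = 1)
    (hirr : ∀ i j : S, ∃ m : ℕ, 0 < m ∧ 0 < (P ^ m) i j)
    (hπpos : ∀ i, 0 < π i)
    (hπsum : ∑ i : S, π i = 1)
    (hinv : ∀ j, ∑ i : S, π i * P i j = π j)
    (A B : Finset S) (hA : A.Nonempty) (hB : B.Nonempty) (hAB : Disjoint A B)
    -- infinite-time committors
    (qp qm : S → ℝ)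
    (hqpC : ∀ i ∈ ((A ∪ B)ᶜ : Finset S), qp i = ∑ j : S, P i j * qp j)
    (hqpA : ∀ i ∈ A, qp i = 0) (hqpB : ∀ i ∈ B, qp i = 1)
    (hqmC : ∀ i ∈ ((A ∪ B)ᶜ : Finset S),
      qm i = ∑ j : S, (π j / π i * P j i) * qm j)
    (hqmA : ∀ i ∈ A, qm i = 1) (hqmB : ∀ i ∈ B, qm i = 0)
    -- finite-time forward committors on {−N, …, N}
    (qf : ℕ → ℤ → S → ℝ)
    (hqfC : ∀ (N : ℕ) (n : ℤ), -(N : ℤ) ≤ n → n < N →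
      ∀ i ∈ ((A ∪ B)ᶜ : Finset S), qf N n i = ∑ j : S, P i j * qf N (n + 1) j)
    (hqfA : ∀ (N : ℕ) (n : ℤ), -(N : ℤ) ≤ n → n ≤ N → ∀ i ∈ A, qf N n i = 0)
    (hqfB : ∀ (N : ℕ) (n : ℤ), -(N : ℤ) ≤ n → n ≤ N → ∀ i ∈ B, qf N n i = 1)
    (hqffin : ∀ N : ℕ, ∀ i ∈ ((A ∪ B)ᶜ : Finset S), qf N (N : ℤ) i = 0)
    -- finite-time backward committors on {−N, …, N}
    (qb : ℕ → ℤ → S → ℝ)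
    (hqbC : ∀ (N : ℕ) (n : ℤ), -(N : ℤ) < n → n ≤ N →
      ∀ i ∈ ((A ∪ B)ᶜ : Finset S),
        qb N n i = ∑ j : S, (π j / π i * P j i) * qb N (n - 1) j)
    (hqbA : ∀ (N : ℕ) (n : ℤ), -(N : ℤ) ≤ n → n ≤ N → ∀ i ∈ A, qb N n i = 1)
    (hqbB : ∀ (N : ℕ) (n : ℤ), -(N : ℤ) ≤ n → n ≤ N → ∀ i ∈ B, qb N n i = 0)
    (hqbinit : ∀ N : ℕ, ∀ i ∈ ((A ∪ B)ᶜ : Finset S), qb N (-(N : ℤ)) i = 0) :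
    -- convergence of the committors
    (∀ (n : ℤ) (i : S), Tendsto (fun N : ℕ => qf N n i) atTop (nhds (qp i))) ∧
    (∀ (n : ℤ) (i : S), Tendsto (fun N : ℕ => qb N n i) atTop (nhds (qm i))) ∧
    -- convergence of the reactive distribution
    (∀ (n : ℤ) (i : S),
      Tendsto (fun N : ℕ => qb N n i * π i * qf N n i) atTop
        (nhds (qm i * π i * qp i))) ∧
    -- convergence of the reactive current
    (∀ (n : ℤ) (i j : S),
      Tendsto (fun N : ℕ => qb N n i * π i * P i j * qf N (n + 1) j) atTop
        (nhds (qm i * π i * P i j * qp j))) ∧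
    -- convergence of the discrete rates
    (∀ n : ℤ,
      Tendsto (fun N : ℕ => ∑ i ∈ A, ∑ j : S, qb N n i * π i * P i j * qf N (n + 1) j)
        atTop (nhds (∑ i ∈ A, ∑ j : S, qm i * π i * P i j * qp j))) ∧
    (∀ n : ℤ,
      Tendsto (fun N : ℕ =>
          ∑ i : S, ∑ j ∈ B, qb N (n - 1) i * π i * P i j * qf N n j)
        atTop (nhds (∑ i : S, ∑ j ∈ B, qm i * π i * P i j * qp j))) :=
  stmt18_general P π hnonneg hrow hirr hπpos hinv A B hA hB qp qm hqpC hqpA hqpB hqmC hqmA hqmB qf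
    hqfC hqfA hqfB hqffin qb hqbC hqbA hqbB hqbinit
end
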